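/- arXiv:2603.19479 — 10 statements merged into one kernel-verified Lean document; each statement's English description precedes it below -/
import Mathlib

section
/- Let L ⊆ ℝ^n be a polytope in standard form and let x ∈ L. Then the convex hull of the vertex support of x equals the set of all points of L whose support is contained in the support of x; that is, Conv(Vsupp(x)) = {y ∈ L : supp(y) ⊆ supp(x)}. -/
/-!
The set `M = {y ∈ L | supp y ⊆ supp x}` is a face of `L`: since `L` lies in the nonnegative
orthant, a point of `M` can only be an interior point of a segment of `L` whose endpoints vanish
wherever it does. Hence the extreme points of `M` are exactly `Vsupp L x`. A vertex `v` of `L` is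
determined by its support (otherwise `v ± t (v - w)` stays in `L` for small `t`), so `L` has
finitely many vertices, and Krein–Milman for the compact convex set `M` gives
`M = closure (conv (Vsupp L x)) = conv (Vsupp L x)`.
-/

/-- The support of a vector: the set of indices with nonzero coordinate. -/
def supp {n : ℕ} (x : Fin n → ℝ) : Set (Fin n) := {i | x i ≠ 0}

/-- A polytope in standard form: a bounded intersection of an affine subspace
(given by linear equations `A x = b`) with the nonnegative orthant. -/
def StdForm {n : ℕ} (L : Set (Fin n → ℝ)) : Prop :=
  Bornology.IsBounded L ∧
    ∃ (k : ℕ) (A : Matrix (Fin k) (Fin n) ℝ) (b : Fin k → ℝ),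
      L = {x | A.mulVec x = b ∧ ∀ i, 0 ≤ x i}

/-- The vertex support of `x` in `L`: the set of extreme points (vertices) of `L`
whose support is contained in the support of `x`. -/
def Vsupp {n : ℕ} (L : Set (Fin n → ℝ)) (x : Fin n → ℝ) : Set (Fin n → ℝ) :=
  {y ∈ Set.extremePoints ℝ L | supp y ⊆ supp x}

open Filter Topology Matrix

theorem convexHull_extremePoints_of_finite {E : Type*} [AddCommGroup E] [Module ℝ E]
    [TopologicalSpace E] [T2Space E] [IsTopologicalAddGroup E] [ContinuousSMul ℝ E]
    [LocallyConvexSpace ℝ E] {s : Set E} (hcomp : IsCompact s) (hconv : Convex ℝ s)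
    (hfin : (s.extremePoints ℝ).Finite) : convexHull ℝ (s.extremePoints ℝ) = s := by
  rw [← (hfin.isClosed_convexHull ℝ).closure_eq, closure_convexHull_extremePoints hcomp hconv]

variable {n : ℕ}

lemma supp_subset_supp_iff {x y : Fin n → ℝ} : supp y ⊆ supp x ↔ ∀ i, x i = 0 → y i = 0 :=
  forall_congr' fun _ => not_imp_not

lemma setOf_supp_subset_eq_biInter (S : Set (Fin n)) :
    {y : Fin n → ℝ | supp y ⊆ S} = ⋂ i ∈ Sᶜ, {y | y i = 0} := by
  ext y
  simp [Set.subset_def, supp, not_imp_comm]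

lemma convex_setOf_supp_subset (S : Set (Fin n)) : Convex ℝ {y : Fin n → ℝ | supp y ⊆ S} := by
  rw [setOf_supp_subset_eq_biInter]
  exact convex_iInter₂ fun i _ => convex_hyperplane (LinearMap.proj i).isLinear 0

lemma isClosed_setOf_supp_subset (S : Set (Fin n)) :
    IsClosed {y : Fin n → ℝ | supp y ⊆ S} := by
  rw [setOf_supp_subset_eq_biInter]
  exact isClosed_biInter fun i _ => isClosed_eq (continuous_apply i) continuous_const

lemma isExtreme_inter_setOf_supp_subset {L : Set (Fin n → ℝ)} (hL : ∀ y ∈ L, ∀ i, 0 ≤ y i)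
    (S : Set (Fin n)) : IsExtreme ℝ L (L ∩ {y | supp y ⊆ S}) := by
  refine ⟨Set.inter_subset_left, ?_⟩
  rintro a ha c hc _ ⟨-, hyS⟩ ⟨t, u, ht, hu, -, rfl⟩
  refine ⟨ha, fun i hai => by_contra fun hiS => hai ?_⟩
  have hsum : t * a i + u * c i = 0 := by_contra fun h => hiS (hyS h)
  have hta := ((add_eq_zero_iff_of_nonneg (mul_nonneg ht.le (hL a ha i))
    (mul_nonneg hu.le (hL c hc i))).1 hsum).1
  exact (mul_eq_zero.1 hta).resolve_left ht.ne'

lemma extremePoints_inter_setOf_supp_subset {L : Set (Fin n → ℝ)} (hL : ∀ y ∈ L, ∀ i, 0 ≤ y i)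
    (S : Set (Fin n)) :
    (L ∩ {y | supp y ⊆ S}).extremePoints ℝ = L.extremePoints ℝ ∩ {y | supp y ⊆ S} := by
  rw [(isExtreme_inter_setOf_supp_subset hL S).extremePoints_eq, Set.inter_right_comm,
    Set.inter_eq_right.2 extremePoints_subset]

def stdPolyhedron {k : ℕ} (A : Matrix (Fin k) (Fin n) ℝ) (b : Fin k → ℝ) : Set (Fin n → ℝ) :=
  {x | A *ᵥ x = b ∧ ∀ i, 0 ≤ x i}

section stdPolyhedron

variable {k : ℕ} (A : Matrix (Fin k) (Fin n) ℝ) (b : Fin k → ℝ)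

lemma stdPolyhedron_eq : stdPolyhedron A b = A.mulVecLin ⁻¹' {b} ∩ Set.Ici 0 := by
  ext x
  simp [stdPolyhedron, Pi.le_def]

lemma convex_stdPolyhedron : Convex ℝ (stdPolyhedron A b) := by
  rw [stdPolyhedron_eq]
  exact ((convex_singleton b).linear_preimage _).inter (convex_Ici 0)

lemma isClosed_stdPolyhedron : IsClosed (stdPolyhedron A b) := by
  rw [stdPolyhedron_eq]
  exact (isClosed_singleton.preimage A.mulVecLin.continuous_of_finiteDimensional).inter
    isClosed_Ici

variable {A b}

lemma eventually_add_smul_mem_stdPolyhedron {x d : Fin n → ℝ} (hx : x ∈ stdPolyhedron A b)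
    (hAd : A *ᵥ d = 0) (hd : supp d ⊆ supp x) :
    ∀ᶠ t : ℝ in 𝓝 0, x + t • d ∈ stdPolyhedron A b := by
  have hnonneg : ∀ i, ∀ᶠ t : ℝ in 𝓝 0, 0 ≤ x i + t * d i := by
    intro i
    by_cases hxi : x i = 0
    · simp [hxi, supp_subset_supp_iff.1 hd i hxi]
    · have hpos : (0 : ℝ) < x i + 0 * d i := by simpa using (hx.2 i).lt_of_ne' hxi
      exact (continuousAt_const.eventually_lt (g := fun t => x i + t * d i) (by fun_prop)
        hpos).mono fun _ => le_of_lt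
  filter_upwards [eventually_all.2 hnonneg] with t ht
  exact ⟨by rw [mulVec_add, mulVec_smul, hAd, smul_zero, add_zero, hx.1], ht⟩

lemma eq_zero_of_mem_extremePoints_stdPolyhedron {x d : Fin n → ℝ}
    (hx : x ∈ (stdPolyhedron A b).extremePoints ℝ) (hAd : A *ᵥ d = 0) (hd : supp d ⊆ supp x) :
    d = 0 := by
  have h := eventually_add_smul_mem_stdPolyhedron hx.1 hAd hd
  have hneg := (continuous_neg.tendsto' (0 : ℝ) 0 neg_zero).eventually h
  obtain ⟨t, ⟨hplus, hminus⟩, ht⟩ :=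
    (((h.and hneg).filter_mono nhdsWithin_le_nhds).and self_mem_nhdsWithin).exists
      (f := 𝓝[≠] (0 : ℝ))
  have hmid : x ∈ openSegment ℝ (x + t • d) (x + (-t) • d) :=
    ⟨1 / 2, 1 / 2, by norm_num, by norm_num, by norm_num, by module⟩
  have htd : t • d = 0 := by simpa using hx.2 hplus hminus hmid
  exact (smul_eq_zero.1 htd).resolve_left ht

lemma eq_of_mem_extremePoints_stdPolyhedron {x y : Fin n → ℝ}
    (hx : x ∈ (stdPolyhedron A b).extremePoints ℝ) (hy : y ∈ stdPolyhedron A b)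
    (hyx : supp y ⊆ supp x) : y = x := by
  have hAd : A *ᵥ (x - y) = 0 := by rw [mulVec_sub, hx.1.1, hy.1, sub_self]
  have hd : supp (x - y) ⊆ supp x := supp_subset_supp_iff.2 fun i hxi => by
    simp [hxi, supp_subset_supp_iff.1 hyx i hxi]
  exact (sub_eq_zero.1 (eq_zero_of_mem_extremePoints_stdPolyhedron hx hAd hd)).symm

lemma finite_extremePoints_stdPolyhedron : ((stdPolyhedron A b).extremePoints ℝ).Finite :=
  Set.Finite.of_finite_image (f := supp) (Set.toFinite _) fun _ hu _ hv huv =>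
    eq_of_mem_extremePoints_stdPolyhedron hv hu.1 huv.le

end stdPolyhedron

theorem stmt_0_general {n : ℕ} (L : Set (Fin n → ℝ)) (hL : StdForm L)
    (x : Fin n → ℝ) :
    convexHull ℝ (Vsupp L x) = {y ∈ L | supp y ⊆ supp x} := by
  obtain ⟨hbdd, k, A, b, rfl⟩ := hL
  change convexHull ℝ (Vsupp (stdPolyhedron A b) x) = stdPolyhedron A b ∩ {y | supp y ⊆ supp x}
  have hext : (stdPolyhedron A b ∩ {y | supp y ⊆ supp x}).extremePoints ℝ =
      Vsupp (stdPolyhedron A b) x :=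
    extremePoints_inter_setOf_supp_subset (fun _ hy => hy.2) _
  rw [← hext]
  apply convexHull_extremePoints_of_finite
  · exact Metric.isCompact_of_isClosed_isBounded
      ((isClosed_stdPolyhedron A b).inter (isClosed_setOf_supp_subset _))
      (hbdd.subset Set.inter_subset_left)
  · exact (convex_stdPolyhedron A b).inter (convex_setOf_supp_subset _)
  · rw [hext]
    exact finite_extremePoints_stdPolyhedron.subset fun _ hy => hy.1

theorem stmt_0 {n : ℕ} (L : Set (Fin n → ℝ)) (hL : StdForm L)
    (x : Fin n → ℝ) (hx : x ∈ L) :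
    convexHull ℝ (Vsupp L x) = {y ∈ L | supp y ⊆ supp x} :=
  stmt_0_general L hL x
end

section
/- Let L ⊆ ℝ^n be a polytope in standard form and let x, y ∈ L. Then supp(y) ⊆ supp(x) if and only if there exist a real number α with 0 < α ≤ 1 and a point z ∈ L such that x = α·y + (1−α)·z. -/
open Filter Topology Matrix

section StandardPolyhedron

variable {ι κ : Type*}

def standardPolyhedron [Fintype ι] (A : Matrix κ ι ℝ) (b : κ → ℝ) : Set (ι → ℝ) :=
  {x | A *ᵥ x = b ∧ ∀ i, 0 ≤ x i}

theorem exists_pos_lt_one_smul_le_of_support_subset [Finite ι] {x y : ι → ℝ}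
    (hx : ∀ i, 0 ≤ x i) (hsupp : Function.support y ⊆ Function.support x) :
    ∃ α : ℝ, 0 < α ∧ α < 1 ∧ α • y ≤ x := by
  have hcoord : ∀ i, ∀ᶠ α in 𝓝[>] (0 : ℝ), α * y i ≤ x i := by
    intro i
    rcases (hx i).eq_or_lt with hxi | hxi
    · have hyi : y i = 0 := by_contra fun hyi => hsupp hyi hxi.symm
      exact Eventually.of_forall fun α => by simp [hyi, ← hxi]
    · have hlim : Tendsto (fun α : ℝ => α * y i) (𝓝[>] 0) (𝓝 0) :=
        tendsto_nhdsWithin_of_tendsto_nhds (by simpa using (continuous_mul_const (y i)).tendsto 0)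
      exact (hlim.eventually (gt_mem_nhds hxi)).mono fun _ h => h.le
  have hsmall : ∀ᶠ α in 𝓝[>] (0 : ℝ), α < 1 :=
    nhdsWithin_le_nhds (gt_mem_nhds one_pos)
  obtain ⟨α, hαpos, hα1, hle⟩ :=
    (eventually_mem_nhdsWithin.and (hsmall.and (eventually_all.2 hcoord))).exists
  exact ⟨α, hαpos, hα1, fun i => hle i⟩

theorem exists_mem_standardPolyhedron_eq_smul_add [Fintype ι] {A : Matrix κ ι ℝ} {b : κ → ℝ}
    {x y : ι → ℝ} (hx : x ∈ standardPolyhedron A b) (hy : y ∈ standardPolyhedron A b)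
    (hsupp : Function.support y ⊆ Function.support x) :
    ∃ α : ℝ, 0 < α ∧ α ≤ 1 ∧ ∃ z ∈ standardPolyhedron A b, x = α • y + (1 - α) • z := by
  obtain ⟨hxA, hxpos⟩ := hx
  obtain ⟨α, hαpos, hα1, hle⟩ := exists_pos_lt_one_smul_le_of_support_subset hxpos hsupp
  have hne : (1 - α) ≠ 0 := (sub_pos.2 hα1).ne'
  refine ⟨α, hαpos, hα1.le, (1 - α)⁻¹ • (x - α • y), ⟨?_, fun i => ?_⟩, ?_⟩
  · rw [mulVec_smul, mulVec_sub, mulVec_smul, hxA, hy.1,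
      show b - α • b = (1 - α) • b by rw [sub_smul, one_smul], inv_smul_smul₀ hne]
  · exact mul_nonneg (inv_nonneg.2 (sub_pos.2 hα1).le) (sub_nonneg.2 (hle i))
  · rw [smul_inv_smul₀ hne, add_sub_cancel]

theorem support_subset_of_eq_smul_add {x y z : ι → ℝ} {α : ℝ} (hy : ∀ i, 0 ≤ y i)
    (hz : ∀ i, 0 ≤ z i) (hα0 : 0 < α) (hα1 : α ≤ 1) (hxyz : x = α • y + (1 - α) • z) :
    Function.support y ⊆ Function.support x := by
  intro i hyi
  have hxi : α * y i ≤ x i := by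
    rw [hxyz]
    simpa using mul_nonneg (sub_nonneg.2 hα1) (hz i)
  exact (lt_of_lt_of_le (mul_pos hα0 ((hy i).lt_of_ne' hyi)) hxi).ne'

theorem support_subset_iff_exists_eq_smul_add [Fintype ι] {A : Matrix κ ι ℝ} {b : κ → ℝ}
    {x y : ι → ℝ} (hx : x ∈ standardPolyhedron A b) (hy : y ∈ standardPolyhedron A b) :
    Function.support y ⊆ Function.support x ↔
      ∃ α : ℝ, 0 < α ∧ α ≤ 1 ∧ ∃ z ∈ standardPolyhedron A b, x = α • y + (1 - α) • z :=
  ⟨exists_mem_standardPolyhedron_eq_smul_add hx hy,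
    fun ⟨_, hα0, hα1, _, hz, hxyz⟩ => support_subset_of_eq_smul_add hy.2 hz.2 hα0 hα1 hxyz⟩

end StandardPolyhedron

theorem stmt_2 {n : ℕ} (L : Set (Fin n → ℝ)) (hL : StdForm L)
    (x y : Fin n → ℝ) (hx : x ∈ L) (hy : y ∈ L) :
    supp y ⊆ supp x ↔
      ∃ α : ℝ, 0 < α ∧ α ≤ 1 ∧ ∃ z ∈ L, x = α • y + (1 - α) • z := by
  obtain ⟨-, k, A, b, rfl⟩ := hL
  exact support_subset_iff_exists_eq_smul_add hx hy
end

section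
/- Let L ⊆ ℝ^n be a polytope in standard form and let {x⁽¹⁾, …, x⁽ᵏ⁾} be a finite set of extreme points of L whose convex hull is an exposed face of L. Then for any nonnegative reals α₁, …, α_k with α₁ + ⋯ + α_k = 1, every extreme point y of L with supp(y) ⊆ supp(α₁x⁽¹⁾ + ⋯ + α_k x⁽ᵏ⁾) belongs to {x⁽¹⁾, …, x⁽ᵏ⁾}; that is, Vsupp(α₁x⁽¹⁾ + ⋯ + α_k x⁽ᵏ⁾) ⊆ {x⁽¹⁾, …, x⁽ᵏ⁾}. -/
theorem stmt_5 {n : ℕ} (L : Set (Fin n → ℝ)) (hL : StdForm L)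
    (V : Finset (Fin n → ℝ)) (hV : ↑V ⊆ Set.extremePoints ℝ L)
    (hface : IsExposed ℝ L (convexHull ℝ ↑V))
    (α : (Fin n → ℝ) → ℝ) (hα : ∀ v ∈ V, 0 ≤ α v)
    (hsum : ∑ v ∈ V, α v = 1) :
    Vsupp L (∑ v ∈ V, α v • v) ⊆ ↑V := by
  obtain ⟨-, k, A, b, rfl⟩ := hL
  set L : Set (Fin n → ℝ) := {x | A.mulVec x = b ∧ ∀ i, 0 ≤ x i} with hLdef
  set x : Fin n → ℝ := ∑ v ∈ V, α v • v with hxdef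
  -- x is in the convex hull of V
  have hxhull : x ∈ convexHull ℝ (V : Set (Fin n → ℝ)) :=
    (convex_convexHull ℝ _).sum_mem hα hsum (fun v hv => subset_convexHull ℝ _ hv)
  have hhullL : convexHull ℝ (V : Set (Fin n → ℝ)) ⊆ L := hface.subset
  have hxL : x ∈ L := hhullL hxhull
  rintro y ⟨hyext, hysupp⟩
  have hyL : y ∈ L := hyext.1
  -- choose ε
  classical
  set S : Finset (Fin n) := Finset.univ.filter (fun i => y i ≠ 0) with hSdef
  have hxpos : ∀ i ∈ S, 0 < x i := by
    intro i hi
    have hne : y i ≠ 0 := by simpa [hSdef] using hi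
    have : x i ≠ 0 := hysupp hne
    exact lt_of_le_of_ne (hxL.2 i) (Ne.symm this)
  have hypos : ∀ i ∈ S, 0 < y i := by
    intro i hi
    have hne : y i ≠ 0 := by simpa [hSdef] using hi
    exact lt_of_le_of_ne (hyL.2 i) (Ne.symm hne)
  set d : ℝ := if h : S.Nonempty then S.inf' h (fun i => x i / y i) else 1 with hddef
  have hd0 : 0 < d := by
    rw [hddef]
    split
    · rename_i h
      rw [Finset.lt_inf'_iff]
      intro i hi
      exact div_pos (hxpos i hi) (hypos i hi)
    · norm_num
  set ε : ℝ := 2⁻¹ * min 1 d with hεdef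
  have hε0 : 0 < ε := by positivity
  have hε1 : ε < 1 := by
    have : min 1 d ≤ 1 := min_le_left _ _
    nlinarith
  have hεd : ∀ i ∈ S, ε * y i ≤ x i := by
    intro i hi
    have h1 : ε ≤ d := by
      have : min 1 d ≤ d := min_le_right _ _
      nlinarith
    have h2 : d ≤ x i / y i := by
      rw [hddef]
      rw [dif_pos ⟨i, hi⟩]
      exact Finset.inf'_le _ hi
    have := hypos i hi
    calc ε * y i ≤ (x i / y i) * y i := by nlinarith
    _ = x i := by field_simp
  have hnonneg : ∀ i, 0 ≤ x i - ε * y i := by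
    intro i
    by_cases h : y i = 0
    · simp [h, hxL.2 i]
    · have : i ∈ S := by simp [hSdef, h]
      linarith [hεd i this]
  -- z := (1-ε)⁻¹ • (x - ε • y) ∈ L
  have h1ε : (1 : ℝ) - ε ≠ 0 := by linarith
  set z : Fin n → ℝ := (1 - ε)⁻¹ • (x - ε • y) with hzdef
  have hzL : z ∈ L := by
    constructor
    · rw [hzdef, Matrix.mulVec_smul, Matrix.mulVec_sub, Matrix.mulVec_smul, hxL.1, hyL.1]
      funext j
      simp only [Pi.smul_apply, Pi.sub_apply, smul_eq_mul]
      field_simp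
    · intro i
      rw [hzdef]
      simp only [Pi.smul_apply, Pi.sub_apply, smul_eq_mul]
      have h1 : 0 < (1 - ε)⁻¹ := by
        apply inv_pos.2; linarith
      exact mul_nonneg h1.le (hnonneg i)
  have hxeq : x = (1 - ε) • z + ε • y := by
    rw [hzdef, smul_inv_smul₀ h1ε]
    funext i; simp
  -- obtain the exposing functional
  obtain ⟨l, hl⟩ := hface ⟨x, hxhull⟩
  have hxmem : x ∈ {w ∈ L | ∀ u ∈ L, l u ≤ l w} := hl ▸ hxhull
  have hlz : l z ≤ l x := hxmem.2 z hzL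
  have hly : l y ≤ l x := hxmem.2 y hyL
  have hcalc : l x = (1 - ε) * l z + ε * l y := by
    rw [hxeq]
    simp
  have hlyx : l y = l x := by nlinarith
  have hyhull : y ∈ convexHull ℝ (V : Set (Fin n → ℝ)) := by
    rw [hl]
    exact ⟨hyL, fun u hu => hlyx ▸ hxmem.2 u hu⟩
  -- y is an extreme point of the convex hull, hence in V
  have hyext' : y ∈ Set.extremePoints ℝ (convexHull ℝ (V : Set (Fin n → ℝ))) := by
    rw [mem_extremePoints] at hyext ⊢
    exact ⟨hyhull, fun x1 hx1 x2 hx2 h => hyext.2 x1 (hhullL hx1) x2 (hhullL hx2) h⟩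
  exact extremePoints_convexHull_subset hyext'
end

section
/- Let p = (p₁, …, pₙ) ∈ Dist(D_n, m) be a distribution on the dipole graph with n edges and m outcomes, and for each i set A_i := {(e_a, e_b) ∈ ℝ^m × ℝ^m : (p_i)_{ab} ≠ 0}. Then p is an extreme point of Dist(D_n, m) if and only if every A_i is affinely independent and the intersection ⋂_{i=1}^n Conv(A_i) consists of a single point. (When the A_i are affinely independent, the unique affine representation of this point over each A_i automatically has all coefficients nonzero, namely the nonzero entries of p_i.) -/
open Finset

variable {m : ℕ}

/-- the vertex map -/
def fvert (m : ℕ) : Fin m × Fin m → (Fin m → ℝ) × (Fin m → ℝ) :=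
  fun c => (Pi.single c.1 1, Pi.single c.2 1)

lemma single_inj {a a' : Fin m} (h : (Pi.single a 1 : Fin m → ℝ) = Pi.single a' 1) : a = a' := by
  by_contra hne
  have := congr_fun h a
  simp [Pi.single_apply, hne] at this

lemma fvert_inj : Function.Injective (fvert m) := by
  rintro ⟨a, b⟩ ⟨a', b'⟩ h
  have h1 := congr_arg Prod.fst h
  have h2 := congr_arg Prod.snd h
  simp only [fvert] at h1 h2
  exact Prod.ext (single_inj h1) (single_inj h2)

lemma sum_smul_fvert (d : Fin m × Fin m → ℝ) :
    ∑ c : Fin m × Fin m, d c • fvert m c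
      = ((fun x => ∑ b, d (x, b)), (fun y => ∑ a, d (a, y))) := by
  refine Prod.ext ?_ ?_ <;> funext x <;>
    simp [fvert, Prod.fst_sum, Prod.snd_sum, Finset.sum_apply, Pi.single_apply,
      Fintype.sum_prod_type, mul_ite, Finset.sum_ite_eq, Finset.sum_ite_eq']

lemma sum_subtype_set {α M : Type*} [Fintype α] [AddCommMonoid M] (S : Set α) [Fintype ↥S]
    (g : α → M) (hg : ∀ c, c ∉ S → g c = 0) : ∑ x : ↥S, g ↑x = ∑ c, g c := by
  classical
  rw [← Finset.sum_subtype S.toFinset (by simp) g]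
  exact Finset.sum_subset (Finset.subset_univ _) (by simpa using fun c hc => hg c hc)

lemma key_aux (S : Set (Fin m × Fin m)) :
    AffineIndependent ℝ ((↑) : (fvert m '' S) → ((Fin m → ℝ) × (Fin m → ℝ))) ↔
      ∀ d : Fin m × Fin m → ℝ, (∀ c, c ∉ S → d c = 0) → (∑ c, d c = 0) →
        (∑ c, d c • fvert m c = 0) → ∀ c, d c = 0 := by
  classical
  haveI : Fintype ↥S := (Set.toFinite S).fintype
  haveI : Fintype ↥(fvert m '' S) := ((Set.toFinite S).image _).fintype
  set e : ↥S ≃ ↥(fvert m '' S) := Equiv.Set.image (fvert m) S fvert_inj with he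
  have hecoe : ∀ x : ↥S, ((e x : (Fin m → ℝ) × (Fin m → ℝ))) = fvert m x := by
    intro x; simp [he]
  constructor
  · intro hAI d hsupp hsum hvec c
    by_cases hc : c ∈ S
    · set w : ↥(fvert m '' S) → ℝ := fun v => d (e.symm v) with hw
      have h1 : ∑ v, w v = 0 := by
        rw [hw]
        rw [Equiv.sum_comp e.symm (fun x : ↥S => d ↑x)]
        rw [sum_subtype_set S d hsupp]; exact hsum
      have h2 : ∑ v, w v • (v : (Fin m → ℝ) × (Fin m → ℝ)) = 0 := by
        have := Equiv.sum_comp e (fun v : ↥(fvert m '' S) => w v • (v : (Fin m → ℝ) × (Fin m → ℝ)))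
        rw [← this]
        have : ∀ x : ↥S, w (e x) • ((e x : (Fin m → ℝ) × (Fin m → ℝ))) = d ↑x • fvert m ↑x := by
          intro x; rw [hw]; simp [hecoe x]
        rw [Finset.sum_congr rfl (fun x _ => this x)]
        rw [sum_subtype_set S (fun c => d c • fvert m c) (fun c hc => by simp [hsupp c hc])]
        exact hvec
      have := affineIndependent_iff.mp hAI Finset.univ w h1 (by simpa using h2)
      have hz := this (e ⟨c, hc⟩) (Finset.mem_univ _)
      rw [hw] at hz; simpa using hz
    · exact hsupp c hc
  · intro H
    rw [affineIndependent_iff]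
    intro t w hw0 hwvec v hv
    set wA : ↥(fvert m '' S) → ℝ := fun v => if v ∈ t then w v else 0 with hwA
    set d : Fin m × Fin m → ℝ := fun c => if h : c ∈ S then wA (e ⟨c, h⟩) else 0 with hd
    have hsupp : ∀ c, c ∉ S → d c = 0 := fun c hc => by simp [hd, hc]
    have hsub : ∀ x : ↥S, d ↑x = wA (e x) := by
      intro x; simp [hd, x.2]
    have hsum : ∑ c, d c = 0 := by
      rw [← sum_subtype_set S d hsupp, Finset.sum_congr rfl (fun x _ => hsub x),
        Equiv.sum_comp e wA, hwA]
      rw [Finset.sum_ite_mem, Finset.univ_inter]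
      exact hw0
    have hvec : ∑ c, d c • fvert m c = 0 := by
      rw [← sum_subtype_set S (fun c => d c • fvert m c) (fun c hc => by simp [hsupp c hc])]
      have : ∀ x : ↥S, d ↑x • fvert m ↑x = wA (e x) • ((e x : (Fin m → ℝ) × (Fin m → ℝ))) := by
        intro x; rw [hsub x, hecoe x]
      rw [Finset.sum_congr rfl (fun x _ => this x),
        Equiv.sum_comp e (fun v => wA v • (v : (Fin m → ℝ) × (Fin m → ℝ))), hwA]
      simp only [ite_smul, zero_smul]
      rw [Finset.sum_ite_mem, Finset.univ_inter]
      simpa using hwvec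
    -- now conclude
    obtain ⟨vv, hvS⟩ := v
    obtain ⟨c, hcS, hfc⟩ := hvS
    have hz := H d hsupp hsum hvec c
    have hev : e ⟨c, hcS⟩ = ⟨vv, ⟨c, hcS, hfc⟩⟩ := by
      apply Subtype.ext; simp [hecoe ⟨c, hcS⟩, hfc]
    have : d c = w ⟨vv, ⟨c, hcS, hfc⟩⟩ := by
      rw [hd]; simp only [hcS, dif_pos, hwA, hev]
      simp [hv]
    rw [this] at hz
    exact hz

lemma conv_mem_iff (S : Set (Fin m × Fin m)) (u : (Fin m → ℝ) × (Fin m → ℝ)) :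
    u ∈ convexHull ℝ (fvert m '' S) ↔
      ∃ d : Fin m × Fin m → ℝ, (∀ c, 0 ≤ d c) ∧ (∀ c, c ∉ S → d c = 0) ∧
        (∑ c, d c = 1) ∧ ∑ c, d c • fvert m c = u := by
  classical
  have hSfin : S.Finite := Set.toFinite S
  have hAfin : (fvert m '' S).Finite := hSfin.image _
  constructor
  · intro hu
    rw [Set.Finite.convexHull_eq hAfin] at hu
    obtain ⟨w, hw0, hw1, hwc⟩ := hu
    have himg : hAfin.toFinset = hSfin.toFinset.image (fvert m) := by
      ext v; simp [Set.Finite.mem_toFinset]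
    refine ⟨fun c => if c ∈ S then w (fvert m c) else 0, fun c => ?_, fun c hc => by simp [hc],
      ?_, ?_⟩
    · by_cases hc : c ∈ S
      · simp only [hc, if_pos]; exact hw0 _ ⟨c, hc, rfl⟩
      · simp [hc]
    · rw [← Finset.sum_subset hSfin.toFinset.subset_univ
        (fun c _ hc => by simp [Set.Finite.mem_toFinset] at hc ⊢; intro h; exact absurd h hc)]
      rw [← hw1, himg, Finset.sum_image (fun a _ b _ h => fvert_inj h)]
      exact Finset.sum_congr rfl fun c hc => by
        simp only [Set.Finite.mem_toFinset] at hc; rw [if_pos hc]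
    · rw [← Finset.sum_subset hSfin.toFinset.subset_univ
        (fun c _ hc => by simp [Set.Finite.mem_toFinset] at hc ⊢; intro h; exact absurd h hc)]
      rw [Finset.centerMass_eq_of_sum_1 _ _ hw1] at hwc
      rw [← hwc, himg, Finset.sum_image (fun a _ b _ h => fvert_inj h)]
      exact Finset.sum_congr rfl fun c hc => by
        simp only [Set.Finite.mem_toFinset] at hc; beta_reduce; rw [if_pos hc]; rfl
  · rintro ⟨d, hd0, hdsupp, hd1, hdu⟩
    have hsum : ∑ c ∈ hSfin.toFinset, d c = 1 := by
      rw [← hd1]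
      exact Finset.sum_subset hSfin.toFinset.subset_univ
        (fun c _ hc => hdsupp c (by simpa [Set.Finite.mem_toFinset] using hc))
    have := Finset.centerMass_mem_convexHull (s := fvert m '' S) hSfin.toFinset
      (w := d) (fun c _ => hd0 c) (by rw [hsum]; norm_num) (z := fvert m)
      (fun c hc => ⟨c, by simpa [Set.Finite.mem_toFinset] using hc, rfl⟩)
    rwa [Finset.centerMass_eq_of_sum_1 _ _ hsum,
      Finset.sum_subset hSfin.toFinset.subset_univ
        (fun c _ hc => by simp [hdsupp c (by simpa [Set.Finite.mem_toFinset] using hc)]), hdu]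
      at this

/-- The polytope `Dist(D_n, m)` of distributions on the dipole graph with `n`
parallel edges and `m` outcomes: tuples of `m × m` matrices with nonnegative
entries summing to `1`, all having the same row-sum vector and the same
column-sum vector. -/
def DipoleDist (n m : ℕ) : Set (Fin n → Matrix (Fin m) (Fin m) ℝ) :=
  {p | (∀ i a b, 0 ≤ p i a b) ∧ (∀ i, ∑ a, ∑ b, p i a b = 1) ∧
       (∀ i j a, ∑ b, p i a b = ∑ b, p j a b) ∧
       (∀ i j b, ∑ a, p i a b = ∑ a, p j a b)}

/-- The set of product-simplex vertices `(e_a, e_b)` corresponding to the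
nonzero entries of the `i`-th matrix of `p`. -/
def prodA {n m : ℕ} (p : Fin n → Matrix (Fin m) (Fin m) ℝ) (i : Fin n) :
    Set ((Fin m → ℝ) × (Fin m → ℝ)) :=
  {v | ∃ a b, p i a b ≠ 0 ∧ v = (Pi.single a 1, Pi.single b 1)}

lemma prodA_eq {n m : ℕ} (p : Fin n → Matrix (Fin m) (Fin m) ℝ) (i : Fin n) :
    prodA p i = fvert m '' {c | p i c.1 c.2 ≠ 0} := by
  ext v
  constructor
  · rintro ⟨a, b, hab, rfl⟩
    exact ⟨(a, b), hab, rfl⟩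
  · rintro ⟨⟨a, b⟩, hab, rfl⟩
    exact ⟨a, b, hab, rfl⟩

lemma perturb {n m : ℕ} (hn : 1 ≤ n) (hm : 2 ≤ m) {p : Fin n → Matrix (Fin m) (Fin m) ℝ}
    (hex : p ∈ Set.extremePoints ℝ (DipoleDist n m))
    (q : Fin n → Matrix (Fin m) (Fin m) ℝ)
    (hq1 : ∀ i, ∑ a, ∑ b, q i a b = 1)
    (hq2 : ∀ i j a, ∑ b, q i a b = ∑ b, q j a b)
    (hq3 : ∀ i j b, ∑ a, q i a b = ∑ a, q j a b)
    (hsupp : ∀ i a b, p i a b = 0 → q i a b = 0) : q = p := by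
  classical
  rw [mem_extremePoints] at hex
  obtain ⟨hpD, hext⟩ := hex
  obtain ⟨hp0, hps, hpr, hpc⟩ := hpD
  haveI : Nonempty (Fin n × Fin m × Fin m) :=
    ⟨(⟨0, hn⟩, ⟨0, by omega⟩, ⟨0, by omega⟩)⟩
  set F : Fin n × Fin m × Fin m → ℝ := fun c =>
    if q c.1 c.2.1 c.2.2 - p c.1 c.2.1 c.2.2 = 0 then 1
    else p c.1 c.2.1 c.2.2 / |q c.1 c.2.1 c.2.2 - p c.1 c.2.1 c.2.2| with hF
  have hFpos : ∀ c, 0 < F c := by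
    rintro ⟨i, a, b⟩
    rw [hF]
    dsimp only
    split_ifs with hd
    · norm_num
    · have hpne : p i a b ≠ 0 := fun h => hd (by rw [hsupp i a b h, h, sub_zero])
      exact div_pos (lt_of_le_of_ne (hp0 i a b) (Ne.symm hpne)) (abs_pos.mpr hd)
  set ε : ℝ := Finset.univ.inf' Finset.univ_nonempty F with hεdef
  have hε : 0 < ε := (Finset.lt_inf'_iff _).mpr fun c _ => hFpos c
  have hbound : ∀ i a b, ε * |q i a b - p i a b| ≤ p i a b := by
    intro i a b
    by_cases hd : q i a b - p i a b = 0
    · rw [hd, abs_zero, mul_zero]; exact hp0 i a b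
    · have h1 : ε ≤ F (i, a, b) := Finset.inf'_le _ (Finset.mem_univ _)
      rw [hF] at h1
      simp only [if_neg hd] at h1
      have habs : 0 < |q i a b - p i a b| := abs_pos.mpr hd
      calc ε * |q i a b - p i a b| ≤ (p i a b / |q i a b - p i a b|) * |q i a b - p i a b| :=
            mul_le_mul_of_nonneg_right h1 habs.le
        _ = p i a b := div_mul_cancel₀ _ habs.ne'
  set x₁ : Fin n → Matrix (Fin m) (Fin m) ℝ :=
    fun i => Matrix.of fun a b => p i a b + ε * (q i a b - p i a b) with hx₁def
  set x₂ : Fin n → Matrix (Fin m) (Fin m) ℝ :=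
    fun i => Matrix.of fun a b => p i a b - ε * (q i a b - p i a b) with hx₂def
  have hx₁e : ∀ i a b, x₁ i a b = p i a b + ε * (q i a b - p i a b) := fun i a b => rfl
  have hx₂e : ∀ i a b, x₂ i a b = p i a b - ε * (q i a b - p i a b) := fun i a b => rfl
  have habs_le : ∀ i a b, |ε * (q i a b - p i a b)| ≤ p i a b := by
    intro i a b
    rw [abs_mul, abs_of_pos hε]
    exact hbound i a b
  have hx₁D : x₁ ∈ DipoleDist n m := by
    refine ⟨fun i a b => ?_, fun i => ?_, fun i j a => ?_, fun i j b => ?_⟩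
    · rw [hx₁e]
      have := (abs_le.mp (habs_le i a b)).1
      linarith
    · simp only [hx₁e, Finset.sum_add_distrib, ← Finset.mul_sum, Finset.sum_sub_distrib]
      rw [hps i, hq1 i]; ring
    · simp only [hx₁e, Finset.sum_add_distrib, ← Finset.mul_sum, Finset.sum_sub_distrib]
      rw [hpr i j a, hq2 i j a]
    · simp only [hx₁e, Finset.sum_add_distrib, ← Finset.mul_sum, Finset.sum_sub_distrib]
      rw [hpc i j b, hq3 i j b]
  have hx₂D : x₂ ∈ DipoleDist n m := by
    refine ⟨fun i a b => ?_, fun i => ?_, fun i j a => ?_, fun i j b => ?_⟩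
    · rw [hx₂e]
      have := (abs_le.mp (habs_le i a b)).2
      linarith
    · simp only [hx₂e, Finset.sum_sub_distrib, ← Finset.mul_sum]
      rw [hps i, hq1 i]; ring
    · simp only [hx₂e, Finset.sum_sub_distrib, ← Finset.mul_sum]
      rw [hpr i j a, hq2 i j a]
    · simp only [hx₂e, Finset.sum_sub_distrib, ← Finset.mul_sum]
      rw [hpc i j b, hq3 i j b]
  have hseg : p ∈ openSegment ℝ x₁ x₂ := by
    refine ⟨1/2, 1/2, by norm_num, by norm_num, by norm_num, ?_⟩
    funext i
    ext a b
    simp only [Pi.add_apply, Pi.smul_apply, Matrix.add_apply, Matrix.smul_apply, smul_eq_mul,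
      hx₁e, hx₂e]
    ring
  have h1 := (hext x₁ hx₁D x₂ hx₂D hseg).1
  funext i
  ext a b
  have := congr_fun (congr_fun (congr_fun h1 i) a) b
  rw [hx₁e] at this
  have h2 : ε * (q i a b - p i a b) = 0 := by linarith
  have h3 : q i a b - p i a b = 0 := by
    rcases mul_eq_zero.mp h2 with h | h
    · exact absurd h hε.ne'
    · exact h
  linarith

theorem stmt_11 {n m : ℕ} (hn : 1 ≤ n) (hm : 2 ≤ m)
    (p : Fin n → Matrix (Fin m) (Fin m) ℝ) (hp : p ∈ DipoleDist n m) :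
    p ∈ Set.extremePoints ℝ (DipoleDist n m) ↔
      (∀ i, AffineIndependent ℝ ((↑) : prodA p i → ((Fin m → ℝ) × (Fin m → ℝ)))) ∧
      ∃ u, (⋂ i, convexHull ℝ (prodA p i)) = {u} := by
  classical
  obtain ⟨hp0, hps, hpr, hpc⟩ := hp
  have hp' : p ∈ DipoleDist n m := ⟨hp0, hps, hpr, hpc⟩
  set i₀ : Fin n := ⟨0, hn⟩ with hi₀
  set u : (Fin m → ℝ) × (Fin m → ℝ) := ∑ c : Fin m × Fin m, p i₀ c.1 c.2 • fvert m c with hu_def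
  -- Φ(p i) = u for all i
  have hphi_p : ∀ i, ∑ c : Fin m × Fin m, p i c.1 c.2 • fvert m c = u := by
    intro i
    rw [hu_def, sum_smul_fvert, sum_smul_fvert]
    exact Prod.ext (funext fun x => hpr i i₀ x) (funext fun y => hpc i i₀ y)
  constructor
  · intro hex
    constructor
    · intro i
      rw [prodA_eq, key_aux]
      intro d hdsupp hdsum hdvec
      by_contra hne
      push_neg at hne
      obtain ⟨c₀, hc₀⟩ := hne
      have hrowcol := (sum_smul_fvert d).symm.trans hdvec
      have hrow : ∀ x, ∑ b, d (x, b) = 0 := fun x =>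
        congr_fun (congr_arg Prod.fst hrowcol) x
      have hcol : ∀ y, ∑ a, d (a, y) = 0 := fun y =>
        congr_fun (congr_arg Prod.snd hrowcol) y
      set q : Fin n → Matrix (Fin m) (Fin m) ℝ :=
        Function.update p i (Matrix.of fun a b => p i a b + d (a, b)) with hq_def
      have hqe : ∀ a b, q i a b = p i a b + d (a, b) := by
        intro a b; rw [hq_def, Function.update_self]; rfl
      have hqne : ∀ j, j ≠ i → q j = p j := by
        intro j hj; rw [hq_def, Function.update_of_ne hj]
      have hqrow : ∀ j a, ∑ b, q j a b = ∑ b, p j a b := by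
        intro j a
        by_cases hj : j = i
        · subst hj
          simp only [hqe, Finset.sum_add_distrib, hrow a, add_zero]
        · rw [hqne j hj]
      have hqcol : ∀ j b, ∑ a, q j a b = ∑ a, p j a b := by
        intro j b
        by_cases hj : j = i
        · subst hj
          simp only [hqe, Finset.sum_add_distrib, hcol b, add_zero]
        · rw [hqne j hj]
      have hqp : q = p := by
        refine perturb hn hm hex q (fun j => ?_) (fun j j' a => ?_) (fun j j' b => ?_)
          (fun j a b hz => ?_)
        · rw [show (∑ a, ∑ b, q j a b) = ∑ a, ∑ b, p j a b from
            Finset.sum_congr rfl fun a _ => hqrow j a]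
          exact hps j
        · rw [hqrow j a, hqrow j' a]; exact hpr j j' a
        · rw [hqcol j b, hqcol j' b]; exact hpc j j' b
        · by_cases hj : j = i
          · subst hj
            rw [hqe, hz, zero_add]
            exact hdsupp (a, b) (by simp [hz])
          · rw [hqne j hj]; exact hz
      have := congr_fun (congr_fun (congr_fun hqp i) c₀.1) c₀.2
      rw [hqe] at this
      exact hc₀ (by linarith)
    · refine ⟨u, Set.eq_singleton_iff_unique_mem.mpr ⟨?_, ?_⟩⟩
      · rw [Set.mem_iInter]
        intro i
        rw [prodA_eq, conv_mem_iff]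
        exact ⟨fun c => p i c.1 c.2, fun c => hp0 i c.1 c.2,
          fun c hc => not_not.mp hc, by rw [Fintype.sum_prod_type]; exact hps i, hphi_p i⟩
      · intro u' hu'
        rw [Set.mem_iInter] at hu'
        have hconv : ∀ i, u' ∈ convexHull ℝ (fvert m '' {c : Fin m × Fin m | p i c.1 c.2 ≠ 0}) := by
          intro i; rw [← prodA_eq]; exact hu' i
        choose d hd0 hdsupp hd1 hdu using fun i => (conv_mem_iff _ _).mp (hconv i)
        set q : Fin n → Matrix (Fin m) (Fin m) ℝ :=
          fun i => Matrix.of fun a b => d i (a, b) with hq_def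
        have hqe : ∀ i a b, q i a b = d i (a, b) := fun i a b => rfl
        have hmarg : ∀ i, ((fun x => ∑ b, d i (x, b)), (fun y => ∑ a, d i (a, y)))
            = ((fun x => ∑ b, d i₀ (x, b)), (fun y => ∑ a, d i₀ (a, y))) := by
          intro i
          rw [← sum_smul_fvert, ← sum_smul_fvert, hdu i, hdu i₀]
        have hqp : q = p := by
          refine perturb hn hm hex q (fun i => ?_) (fun i j a => ?_) (fun i j b => ?_)
            (fun i a b hz => ?_)
          · have h := hd1 i; rw [Fintype.sum_prod_type] at h; exact h
          · exact congr_fun (congr_arg Prod.fst ((hmarg i).trans (hmarg j).symm)) a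
          · exact congr_fun (congr_arg Prod.snd ((hmarg i).trans (hmarg j).symm)) b
          · rw [hqe]; exact hdsupp i (a, b) (by simp [hz])
        rw [← hdu i₀, ← hphi_p i₀]
        refine Finset.sum_congr rfl fun c _ => ?_
        rw [show d i₀ c = p i₀ c.1 c.2 from by
          rw [← hqe i₀ c.1 c.2, hqp]]
  · rintro ⟨hai, u', hu'⟩
    rw [mem_extremePoints]
    refine ⟨hp', fun x₁ hx₁ x₂ hx₂ hseg => ?_⟩
    obtain ⟨a, b, ha, hb, hab, habp⟩ := hseg
    -- u' must be u
    have humem : u ∈ ⋂ i, convexHull ℝ (prodA p i) := by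
      rw [Set.mem_iInter]
      intro i
      rw [prodA_eq, conv_mem_iff]
      exact ⟨fun c => p i c.1 c.2, fun c => hp0 i c.1 c.2,
        fun c hc => not_not.mp hc, by rw [Fintype.sum_prod_type]; exact hps i, hphi_p i⟩
    have huu : u = u' := by rw [hu'] at humem; exact humem
    -- supports
    have hsupp : ∀ (y : Fin n → Matrix (Fin m) (Fin m) ℝ), y = x₁ ∨ y = x₂ →
        ∀ i c d', p i c d' = 0 → y i c d' = 0 := by
      rintro y hy i c d' hz
      have h := congr_fun (congr_fun (congr_fun habp i) c) d'
      simp only [Pi.add_apply, Pi.smul_apply, Matrix.add_apply, Matrix.smul_apply,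
        smul_eq_mul] at h
      rw [hz] at h
      have h1 : 0 ≤ a * x₁ i c d' := mul_nonneg ha.le (hx₁.1 i c d')
      have h2 : 0 ≤ b * x₂ i c d' := mul_nonneg hb.le (hx₂.1 i c d')
      have hx1z : a * x₁ i c d' = 0 := by linarith
      have hx2z : b * x₂ i c d' = 0 := by linarith
      rcases hy with rfl | rfl
      · rcases mul_eq_zero.mp hx1z with h' | h'
        · exact absurd h' ha.ne'
        · exact h'
      · rcases mul_eq_zero.mp hx2z with h' | h'
        · exact absurd h' hb.ne'
        · exact h'
    -- Φ(y i) = u for y ∈ Dist supported on p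
    have hphi : ∀ (y : Fin n → Matrix (Fin m) (Fin m) ℝ), y ∈ DipoleDist n m →
        (∀ i c d', p i c d' = 0 → y i c d' = 0) →
        ∀ i, ∑ c : Fin m × Fin m, y i c.1 c.2 • fvert m c = u := by
      intro y hy hysupp i
      have hmem : (∑ c : Fin m × Fin m, y i c.1 c.2 • fvert m c)
          ∈ ⋂ j, convexHull ℝ (prodA p j) := by
        rw [Set.mem_iInter]
        intro j
        rw [prodA_eq, conv_mem_iff]
        refine ⟨fun c => y j c.1 c.2, fun c => hy.1 j c.1 c.2,
          fun c hc => hysupp j c.1 c.2 (not_not.mp hc),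
          by rw [Fintype.sum_prod_type]; exact hy.2.1 j, ?_⟩
        rw [sum_smul_fvert, sum_smul_fvert]
        exact Prod.ext (funext fun x => hy.2.2.1 j i x) (funext fun z => hy.2.2.2 j i z)
      rw [hu'] at hmem
      rw [hmem, huu]
    -- now conclude x₁ = p and x₂ = p via affine independence
    have heq : ∀ (y : Fin n → Matrix (Fin m) (Fin m) ℝ), y ∈ DipoleDist n m →
        (∀ i c d', p i c d' = 0 → y i c d' = 0) → y = p := by
      intro y hy hysupp
      funext i
      have hkey := (key_aux {c : Fin m × Fin m | p i c.1 c.2 ≠ 0}).mp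
        (by rw [← prodA_eq]; exact hai i)
      have hd := hkey (fun c => y i c.1 c.2 - p i c.1 c.2)
        (fun c hc => by
          have hz := not_not.mp hc
          show y i c.1 c.2 - p i c.1 c.2 = 0
          rw [hz, hysupp i c.1 c.2 hz, sub_zero])
        (by
          rw [Finset.sum_sub_distrib, Fintype.sum_prod_type, Fintype.sum_prod_type,
            hy.2.1 i, hps i, sub_self])
        (by
          simp only [sub_smul]
          rw [Finset.sum_sub_distrib, hphi y hy hysupp i, hphi_p i, sub_self])
      ext c d'
      have := hd (c, d')
      simpa [sub_eq_zero] using this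
    exact ⟨heq x₁ hx₁ (hsupp x₁ (Or.inl rfl)), heq x₂ hx₂ (hsupp x₂ (Or.inr rfl))⟩
end

section
/- Let X be a set of product-simplex vertices in ℝ^{2m} and let H(X) be its associated bipartite graph. Then X is affinely independent if and only if H(X) contains no cycle (is acyclic as a simple graph). -/
/-- The bipartite graph `H(X)` associated to a set `X` of product-simplex
vertices in `ℝ^{2m}`: vertices `Sum.inl a` (left, `u_a`) and `Sum.inr b`
(right, `w_b`), with an edge between `u_a` and `w_b` iff `(e_a, e_b) ∈ X`. -/
def Hgraph {m : ℕ} (X : Set ((Fin m → ℝ) × (Fin m → ℝ))) :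
    SimpleGraph (Fin m ⊕ Fin m) :=
  SimpleGraph.fromRel (fun v w =>
    ∃ a b : Fin m, (Pi.single a 1, Pi.single b 1) ∈ X ∧
      v = Sum.inl a ∧ w = Sum.inr b)

/-!
The vertex `(e_a, e_b)` is the edge `u_a w_b` of `H(X)`. Give `u_a` the potential `(1, (e_a, 0))`
and `w_b` the potential `(0, (0, -e_b))`, both in `ℝ × ℝ^{2m}`: the difference of the potentials
along an edge traversed from `u_a` to `w_b` is `(1, (e_a, e_b))`, and its negative in the other
direction. Summing along a cycle therefore telescopes to a nontrivial vanishing affine combination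
with coefficients `±1`.

Conversely, in a forest every edge `u_a w_b` is a bridge. If `S` is the side of `u_a` after
removing it, the linear functional `(x, y) ↦ ∑_{u_c ∈ S} x_c - ∑_{w_c ∈ S} y_c` is `1` at
`(e_a, e_b)` and `0` at every other point of `X`, so it kills all other terms of a vanishing
combination and forces the coefficient of `(e_a, e_b)` to be `0`.
-/

open SimpleGraph Sum

namespace SimpleGraph

variable {V : Type*} {G : SimpleGraph V}

theorem Walk.sum_darts_sub {M : Type*} [AddCommGroup M] (f : V → M) {u v : V}
    (p : G.Walk u v) : (p.darts.map fun d => f d.fst - f d.snd).sum = f u - f v := by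
  induction p with
  | nil => simp
  | cons h q ih => simp [ih]

theorem IsBridge.exists_separating_set {u v : V} (h : G.IsBridge s(u, v)) :
    ∃ S : Set V, u ∈ S ∧ v ∉ S ∧
      ∀ x y, G.Adj x y → s(x, y) ≠ s(u, v) → (x ∈ S ↔ y ∈ S) := by
  refine ⟨{w | (G.deleteEdges {s(u, v)}).Reachable u w}, Reachable.refl _, isBridge_iff.1 h,
    fun x y hxy hne => ?_⟩
  have hxy' : (G.deleteEdges {s(u, v)}).Adj x y := (deleteEdges_adj ..).2 ⟨hxy, hne⟩
  exact ⟨fun hx => hx.trans hxy'.reachable, fun hy => hy.trans hxy'.symm.reachable⟩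

end SimpleGraph

namespace ProductSimplex

variable {m : ℕ} {X : Set ((Fin m → ℝ) × (Fin m → ℝ))}

def vertex (a b : Fin m) : (Fin m → ℝ) × (Fin m → ℝ) :=
  (Pi.single a 1, Pi.single b 1)

theorem vertex_inj {a b a' b' : Fin m} : vertex a b = vertex a' b' ↔ a = a' ∧ b = b' := by
  refine ⟨fun h => ?_, fun ⟨ha, hb⟩ => ha ▸ hb ▸ rfl⟩
  have ha := congrFun (congrArg Prod.fst h) a
  have hb := congrFun (congrArg Prod.snd h) b
  simp only [vertex, Pi.single_apply] at ha hb
  simp_all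

theorem hgraph_adj_iff {u v : Fin m ⊕ Fin m} :
    (Hgraph X).Adj u v ↔
      ∃ a b, vertex a b ∈ X ∧ (u = inl a ∧ v = inr b ∨ u = inr b ∧ v = inl a) := by
  simp only [Hgraph, fromRel_adj]
  constructor
  · rintro ⟨-, ⟨a, b, hab, rfl, rfl⟩ | ⟨a, b, hab, rfl, rfl⟩⟩
    exacts [⟨a, b, hab, .inl ⟨rfl, rfl⟩⟩, ⟨a, b, hab, .inr ⟨rfl, rfl⟩⟩]
  · rintro ⟨a, b, hab, ⟨rfl, rfl⟩ | ⟨rfl, rfl⟩⟩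
    exacts [⟨by simp, .inl ⟨a, b, hab, rfl, rfl⟩⟩, ⟨by simp, .inr ⟨a, b, hab, rfl, rfl⟩⟩]

theorem hgraph_adj_inl_inr {a b : Fin m} : (Hgraph X).Adj (inl a) (inr b) ↔ vertex a b ∈ X := by
  simp [hgraph_adj_iff]

def side : Fin m ⊕ Fin m → ℝ :=
  Sum.elim 1 0

def potential : Fin m ⊕ Fin m → (Fin m → ℝ) × (Fin m → ℝ) :=
  Sum.elim (fun a => (Pi.single a 1, 0)) (fun b => (0, -Pi.single b 1))

def edgeVertex : Fin m ⊕ Fin m → Fin m ⊕ Fin m → (Fin m → ℝ) × (Fin m → ℝ)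
  | inl a, inr b | inr b, inl a => vertex a b
  | _, _ => 0

variable {u v u' v' : Fin m ⊕ Fin m}

theorem edgeVertex_mem (h : (Hgraph X).Adj u v) : edgeVertex u v ∈ X := by
  obtain ⟨a, b, hab, ⟨rfl, rfl⟩ | ⟨rfl, rfl⟩⟩ := hgraph_adj_iff.1 h <;> exact hab

theorem side_sub_ne_zero (h : (Hgraph X).Adj u v) : side u - side v ≠ 0 := by
  obtain ⟨a, b, -, ⟨rfl, rfl⟩ | ⟨rfl, rfl⟩⟩ := hgraph_adj_iff.1 h <;> simp [side]

theorem side_sub_smul_edgeVertex (h : (Hgraph X).Adj u v) :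
    (side u - side v) • edgeVertex u v = potential u - potential v := by
  obtain ⟨a, b, -, ⟨rfl, rfl⟩ | ⟨rfl, rfl⟩⟩ := hgraph_adj_iff.1 h <;>
    simp [side, potential, edgeVertex, vertex]

theorem edgeVertex_inj (h : (Hgraph X).Adj u v) (h' : (Hgraph X).Adj u' v')
    (he : edgeVertex u v = edgeVertex u' v') : s(u, v) = s(u', v') := by
  obtain ⟨a, b, -, ⟨rfl, rfl⟩ | ⟨rfl, rfl⟩⟩ := hgraph_adj_iff.1 h <;>
  obtain ⟨a', b', -, ⟨rfl, rfl⟩ | ⟨rfl, rfl⟩⟩ := hgraph_adj_iff.1 h' <;>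
  obtain ⟨rfl, rfl⟩ := vertex_inj.1 he <;> simp [Sym2.eq_swap]

theorem isAcyclic_of_affineIndependent
    (h : AffineIndependent ℝ ((↑) : X → (Fin m → ℝ) × (Fin m → ℝ))) : (Hgraph X).IsAcyclic := by
  intro v c hc
  set l := c.darts
  let f : Fin l.length → X := fun i => ⟨edgeVertex l[i].fst l[i].snd, edgeVertex_mem l[i].adj⟩
  have hf : Function.Injective f := fun i j hij =>
    Fin.ext <| (hc.edges_nodup.getElem_inj_iff (hi := by simpa [l] using i.2)
      (hj := by simpa [l] using j.2)).1 <| by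
        simp only [Walk.edges, List.getElem_map]
        exact edgeVertex_inj l[i].adj l[j].adj (congrArg Subtype.val hij)
  let w : Fin l.length → ℝ := fun i => side l[i].fst - side l[i].snd
  have hw : ∑ i, w i = 0 :=
    (Fin.sum_univ_fun_getElem l fun d => side d.fst - side d.snd).trans <| by
      rw [c.sum_darts_sub, sub_self]
  have hwf : ∑ i, w i • (f i : (Fin m → ℝ) × (Fin m → ℝ)) = 0 :=
    (Finset.sum_congr rfl fun i _ => side_sub_smul_edgeVertex l[i].adj).trans <|
      (Fin.sum_univ_fun_getElem l fun d => potential d.fst - potential d.snd).trans <| by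
        rw [c.sum_darts_sub, sub_self]
  have hlen : 0 < l.length := c.length_darts ▸ (by have := hc.three_le_length; omega)
  exact side_sub_ne_zero l[0].adj <|
    (h.comp_embedding ⟨f, hf⟩).eq_zero_of_sum_eq_zero hw hwf ⟨0, hlen⟩ (Finset.mem_univ _)

def cutFunctional (ψ : Fin m ⊕ Fin m → ℝ) : (Fin m → ℝ) × (Fin m → ℝ) →ₗ[ℝ] ℝ :=
  (Fintype.linearCombination ℝ (ψ ∘ inl)).coprod (-Fintype.linearCombination ℝ (ψ ∘ inr))

theorem cutFunctional_vertex (ψ : Fin m ⊕ Fin m → ℝ) (a b : Fin m) :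
    cutFunctional ψ (vertex a b) = ψ (inl a) - ψ (inr b) := by
  simp [cutFunctional, vertex, sub_eq_add_neg]

theorem affineIndependent_of_isAcyclic
    (hX : X ⊆ {v | ∃ a b : Fin m, v = (Pi.single a 1, Pi.single b 1)})
    (hac : (Hgraph X).IsAcyclic) : AffineIndependent ℝ ((↑) : X → (Fin m → ℝ) × (Fin m → ℝ)) := by
  classical
  rw [affineIndependent_iff]
  intro s w _ hws x hx
  obtain ⟨a, b, hxab⟩ := hX x.2
  replace hxab : (x : (Fin m → ℝ) × (Fin m → ℝ)) = vertex a b := hxab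
  obtain ⟨S, haS, hbS, hS⟩ := (isAcyclic_iff_forall_adj_isBridge.1 hac
    (hgraph_adj_inl_inr.2 (hxab ▸ x.2))).exists_separating_set
  let ψ : Fin m ⊕ Fin m → ℝ := S.indicator 1
  have hother : ∀ y ∈ s, y ≠ x → w y • cutFunctional ψ y = 0 := by
    intro y _ hyx
    obtain ⟨a', b', hy⟩ := hX y.2
    replace hy : (y : (Fin m → ℝ) × (Fin m → ℝ)) = vertex a' b' := hy
    have hne : s(inl a', inr b') ≠ s(inl a, inr b) := fun he =>
      hyx <| Subtype.ext <| hy.trans <| (vertex_inj.2 (by simpa using he)).trans hxab.symm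
    have hcut := hS _ _ (hgraph_adj_inl_inr.2 (hy ▸ y.2)) hne
    rw [hy, cutFunctional_vertex]
    simp [ψ, Set.indicator_apply, hcut]
  have hψ := congrArg (cutFunctional ψ) hws
  simp only [map_sum, map_smul, map_zero] at hψ
  rw [Finset.sum_eq_single_of_mem x hx hother, hxab, cutFunctional_vertex] at hψ
  simpa [ψ, haS, hbS] using hψ

end ProductSimplex

open ProductSimplex in
theorem stmt_14 {m : ℕ} (X : Set ((Fin m → ℝ) × (Fin m → ℝ)))
    (hX : X ⊆ {v | ∃ a b : Fin m, v = (Pi.single a 1, Pi.single b 1)}) :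
    AffineIndependent ℝ ((↑) : X → ((Fin m → ℝ) × (Fin m → ℝ))) ↔
      (Hgraph X).IsAcyclic :=
  ⟨isAcyclic_of_affineIndependent, affineIndependent_of_isAcyclic hX⟩
end

section
/- Let X be a nonempty set of product-simplex vertices in ℝ^{2m} such that its bipartite graph H(X) is a tree on the vertices incident to edges (i.e., H(X) is acyclic and any two non-isolated vertices of H(X) are joined by a path). Let I_X := {i : ∃ j, (e_i, e_j) ∈ X} and J_X := {j : ∃ i, (e_i, e_j) ∈ X}. Then the linear span of X equals U(X) := {(α, β) ∈ ℝ^m × ℝ^m : Σ_{k=0}^{m−1} α_k = Σ_{k=0}^{m−1} β_k, α_i = 0 for all i ∉ I_X, and β_j = 0 for all j ∉ J_X}. -/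
theorem stmt_15 {m : ℕ} (X : Set ((Fin m → ℝ) × (Fin m → ℝ)))
    (hX : X ⊆ {v | ∃ a b : Fin m, v = (Pi.single a 1, Pi.single b 1)})
    (hne : X.Nonempty)
    (hacyc : (Hgraph X).IsAcyclic)
    (hconn : ∀ v w : Fin m ⊕ Fin m,
      (∃ v', (Hgraph X).Adj v v') → (∃ w', (Hgraph X).Adj w w') →
        (Hgraph X).Reachable v w) :
    (Submodule.span ℝ X : Set ((Fin m → ℝ) × (Fin m → ℝ))) =
      {p | (∑ k, p.1 k = ∑ k, p.2 k) ∧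
           (∀ i, (¬ ∃ j, (Pi.single i 1, Pi.single j 1) ∈ X) → p.1 i = 0) ∧
           (∀ j, (¬ ∃ i, (Pi.single i 1, Pi.single j 1) ∈ X) → p.2 j = 0)} := by
  classical
  -- the potential function on vertices
  set φ : Fin m ⊕ Fin m → (Fin m → ℝ) × (Fin m → ℝ) :=
    Sum.elim (fun a => ((Pi.single a 1 : Fin m → ℝ), (0 : Fin m → ℝ)))
      (fun b => ((0 : Fin m → ℝ), -(Pi.single b 1 : Fin m → ℝ))) with hφ
  have step : ∀ {v w}, (Hgraph X).Adj v w → φ v - φ w ∈ Submodule.span ℝ X := by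
    intro v w h
    rw [Hgraph, SimpleGraph.fromRel_adj] at h
    obtain ⟨hne', h | h⟩ := h
    · obtain ⟨a, b, hm, rfl, rfl⟩ := h
      have : φ (Sum.inl a) - φ (Sum.inr b)
          = ((Pi.single a 1 : Fin m → ℝ), (Pi.single b 1 : Fin m → ℝ)) := by
        simp [hφ, Prod.ext_iff, sub_neg_eq_add]
      rw [this]
      exact Submodule.subset_span hm
    · obtain ⟨a, b, hm, rfl, rfl⟩ := h
      have : φ (Sum.inr b) - φ (Sum.inl a)
          = -((Pi.single a 1 : Fin m → ℝ), (Pi.single b 1 : Fin m → ℝ)) := by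
        simp [hφ, Prod.ext_iff, sub_neg_eq_add]
      rw [this]
      exact (Submodule.span ℝ X).neg_mem (Submodule.subset_span hm)
  have walkmem : ∀ {v w} (p : (Hgraph X).Walk v w), φ v - φ w ∈ Submodule.span ℝ X := by
    intro v w p
    induction p with
    | nil => simp only [sub_self]; exact (Submodule.span ℝ X).zero_mem
    | @cons u u' w h p ih =>
      have := (Submodule.span ℝ X).add_mem (step h) ih
      simpa [sub_add_sub_cancel] using this
  -- key: all (e_a, e_b) with a ∈ I, b ∈ J are in the span
  have hkey : ∀ a b : Fin m, (∃ j, (Pi.single a 1, Pi.single j 1) ∈ X) →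
      (∃ i, (Pi.single i 1, Pi.single b 1) ∈ X) →
      ((Pi.single a 1 : Fin m → ℝ), (Pi.single b 1 : Fin m → ℝ)) ∈ Submodule.span ℝ X := by
    intro a b ⟨j, hj⟩ ⟨i, hi⟩
    have ha : ∃ v', (Hgraph X).Adj (Sum.inl a) v' :=
      ⟨Sum.inr j, by
        rw [Hgraph, SimpleGraph.fromRel_adj]
        exact ⟨by simp, Or.inl ⟨a, j, hj, rfl, rfl⟩⟩⟩
    have hb : ∃ v', (Hgraph X).Adj (Sum.inr b) v' :=
      ⟨Sum.inl i, by
        rw [Hgraph, SimpleGraph.fromRel_adj]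
        exact ⟨by simp, Or.inr ⟨i, b, hi, rfl, rfl⟩⟩⟩
    obtain ⟨p⟩ := hconn _ _ ha hb
    have := walkmem p
    have heq : φ (Sum.inl a) - φ (Sum.inr b)
        = ((Pi.single a 1 : Fin m → ℝ), (Pi.single b 1 : Fin m → ℝ)) := by
      simp [hφ, Prod.ext_iff, sub_neg_eq_add]
    rwa [heq] at this
  apply subset_antisymm
  · -- span ⊆ U
    intro p hp
    have hp' : p ∈ Submodule.span ℝ X := hp
    clear hp
    induction hp' using Submodule.span_induction with
    | mem x hx =>
      obtain ⟨a, b, rfl⟩ := hX hx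
      refine ⟨by simp, ?_, ?_⟩
      · intro i hi
        rcases eq_or_ne i a with rfl | h
        · exact absurd ⟨b, hx⟩ hi
        · exact Pi.single_eq_of_ne h 1
      · intro j hj
        rcases eq_or_ne j b with rfl | h
        · exact absurd ⟨a, hx⟩ hj
        · exact Pi.single_eq_of_ne h 1
    | zero => exact ⟨by simp, fun i _ => rfl, fun j _ => rfl⟩
    | add x y _ _ hxm hym =>
      obtain ⟨hx1, hx2, hx3⟩ := hxm
      obtain ⟨hy1, hy2, hy3⟩ := hym
      refine ⟨?_, fun i hi => ?_, fun j hj => ?_⟩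
      · simp only [Prod.fst_add, Prod.snd_add, Pi.add_apply, Finset.sum_add_distrib, hx1, hy1]
      · simp [hx2 i hi, hy2 i hi]
      · simp [hx3 j hj, hy3 j hj]
    | smul c x _ hxm =>
      obtain ⟨hx1, hx2, hx3⟩ := hxm
      refine ⟨?_, fun i hi => ?_, fun j hj => ?_⟩
      · simp only [Prod.smul_fst, Prod.smul_snd, Pi.smul_apply, smul_eq_mul,
          ← Finset.mul_sum, hx1]
      · simp [hx2 i hi]
      · simp [hx3 j hj]
  · -- U ⊆ span
    rintro ⟨α, β⟩ ⟨h1, h2, h3⟩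
    have h1' : ∑ k, α k = ∑ k, β k := h1
    obtain ⟨x, hx⟩ := hne
    obtain ⟨a0, b0, rfl⟩ := hX hx
    have ha0 : ∃ j, (Pi.single a0 1, Pi.single j 1) ∈ X := ⟨b0, hx⟩
    have hb0 : ∃ i, (Pi.single i 1, Pi.single b0 1) ∈ X := ⟨a0, hx⟩
    have hdecomp : (α, β)
        = (∑ a, α a • ((Pi.single a 1 : Fin m → ℝ), (Pi.single b0 1 : Fin m → ℝ)))
        + (∑ b, β b • ((Pi.single a0 1 : Fin m → ℝ), (Pi.single b 1 : Fin m → ℝ)))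
        - (∑ a, α a) • ((Pi.single a0 1 : Fin m → ℝ), (Pi.single b0 1 : Fin m → ℝ)) := by
      have hsum1 : ∀ (γ : Fin m → ℝ) (i : Fin m),
          ∑ a, γ a * (Pi.single a 1 : Fin m → ℝ) i = γ i := by
        intro γ i
        simp [Pi.single_apply, mul_ite, Finset.sum_ite_eq]
      refine Prod.ext ?_ ?_ <;> funext i <;>
        simp only [Prod.fst_add, Prod.snd_add, Prod.fst_sub, Prod.snd_sub,
          Prod.smul_fst, Prod.smul_snd, Prod.fst_sum, Prod.snd_sum,
          Pi.add_apply, Pi.sub_apply, Pi.smul_apply, Finset.sum_apply,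
          smul_eq_mul]
      · rw [hsum1 α i, ← Finset.sum_mul, ← h1']
        ring
      · rw [hsum1 β i, ← Finset.sum_mul, h1']
        ring
    show (α, β) ∈ Submodule.span ℝ X
    rw [hdecomp]
    refine Submodule.sub_mem _ (Submodule.add_mem _ ?_ ?_) ?_
    · refine Submodule.sum_mem _ fun a _ => ?_
      by_cases ha : ∃ j, (Pi.single a 1, Pi.single j 1) ∈ X
      · exact Submodule.smul_mem _ _ (hkey a b0 ha hb0)
      · have hz : α a = 0 := h2 a ha
        rw [hz]; simp
    · refine Submodule.sum_mem _ fun b _ => ?_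
      by_cases hb : ∃ i, (Pi.single i 1, Pi.single b 1) ∈ X
      · exact Submodule.smul_mem _ _ (hkey a0 b ha0 hb)
      · have hz : β b = 0 := h3 b hb
        rw [hz]; simp
    · exact Submodule.smul_mem _ _ (Submodule.subset_span hx)
end

section
/- Let A₁, …, Aₙ be sets of product-simplex vertices in ℝ^{2m}, each affinely independent. Then ⋂_{i=1}^n span(A_i) = {(α, β) ∈ ℝ^m × ℝ^m : for every i and every connected component C of the bipartite graph H(A_i) (including singleton components of isolated vertices), Σ_{a : u_a ∈ C} α_a = Σ_{b : w_b ∈ C} β_b}. (The right-hand side is exactly the kernel of the matrix Q(A₁, …, Aₙ) of the paper, whose rows are indexed by the connected components of the graphs H(A_i) with entries +1 on left vertices of the component, −1 on right vertices, and 0 otherwise.) -/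
noncomputable def repAux {V : Type*} (G : SimpleGraph V) (v : V) : V :=
  (G.connectedComponentMk v).out

lemma repAux_reachable {V : Type*} (G : SimpleGraph V) (v : V) :
    G.Reachable (repAux G v) v :=
  SimpleGraph.ConnectedComponent.exact (Quot.out_eq _)

lemma repAux_eq_of_reachable {V : Type*} {G : SimpleGraph V} {u v : V}
    (h : G.Reachable u v) : repAux G u = repAux G v := by
  unfold repAux
  rw [SimpleGraph.ConnectedComponent.sound h]

lemma repAux_idem {V : Type*} (G : SimpleGraph V) (v : V) :
    repAux G (repAux G v) = repAux G v :=
  repAux_eq_of_reachable (repAux_reachable G v)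

section Aux

variable {m : ℕ}

open Finset

open scoped Classical in
/-- The linear functional `p ↦ Σ_{reachable left} p.1 − Σ_{reachable right} p.2`. -/
noncomputable def phiAux (G : SimpleGraph (Fin m ⊕ Fin m)) (v : Fin m ⊕ Fin m) :
    ((Fin m → ℝ) × (Fin m → ℝ)) →ₗ[ℝ] ℝ where
  toFun p := (∑ a ∈ univ.filter fun a => G.Reachable v (Sum.inl a), p.1 a)
    - ∑ b ∈ univ.filter fun b => G.Reachable v (Sum.inr b), p.2 b
  map_add' p q := by
    simp only [Prod.fst_add, Prod.snd_add, Pi.add_apply, Finset.sum_add_distrib]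
    ring
  map_smul' r p := by
    simp only [Prod.smul_fst, Prod.smul_snd, Pi.smul_apply, smul_eq_mul, ← Finset.mul_sum,
      RingHom.id_apply]
    ring

open scoped Classical in
lemma phiAux_apply (G : SimpleGraph (Fin m ⊕ Fin m)) (v : Fin m ⊕ Fin m)
    (p : (Fin m → ℝ) × (Fin m → ℝ)) :
    phiAux G v p = (∑ a : Fin m, if G.Reachable v (Sum.inl a) then p.1 a else 0)
      - ∑ b : Fin m, if G.Reachable v (Sum.inr b) then p.2 b else 0 := by
  simp [phiAux, Finset.sum_filter]

lemma sum_ite_single (a : Fin m) (c : Fin m → Prop) [∀ x, Decidable (c x)] :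
    (∑ a' : Fin m, if c a' then Pi.single a (1 : ℝ) a' else 0) = if c a then 1 else 0 := by
  rw [Finset.sum_eq_single a]
  · simp
  · intro b _ hb
    simp [Pi.single_eq_of_ne hb]
  · simp

open scoped Classical in
lemma key {m : ℕ} (A : Set ((Fin m → ℝ) × (Fin m → ℝ)))
    (hA : A ⊆ {v | ∃ a b : Fin m, v = (Pi.single a 1, Pi.single b 1)})
    (p : (Fin m → ℝ) × (Fin m → ℝ)) :
    p ∈ Submodule.span ℝ A ↔ ∀ v : Fin m ⊕ Fin m,
      (∑ a : Fin m, if (Hgraph A).Reachable v (Sum.inl a) then p.1 a else 0) =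
        ∑ b : Fin m, if (Hgraph A).Reachable v (Sum.inr b) then p.2 b else 0 := by
  set G := Hgraph A with hG
  have hadj : ∀ a b : Fin m, (Pi.single a 1, Pi.single b 1) ∈ A →
      G.Adj (Sum.inl a) (Sum.inr b) := by
    intro a b hab
    rw [hG, Hgraph, SimpleGraph.fromRel_adj]
    exact ⟨by simp, Or.inl ⟨a, b, hab, rfl, rfl⟩⟩
  constructor
  · -- span ⊆ kernel conditions
    intro hp v
    have h0 : ∀ x ∈ A, phiAux G v x = 0 := by
      intro x hx
      obtain ⟨a, b, rfl⟩ := hA hx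
      rw [phiAux_apply, sub_eq_zero]
      have h := hadj a b hx
      have hiff : G.Reachable v (Sum.inl a) ↔ G.Reachable v (Sum.inr b) :=
        ⟨fun hr => hr.trans h.reachable, fun hr => hr.trans h.symm.reachable⟩
      show (∑ a' : Fin m, if G.Reachable v (Sum.inl a') then Pi.single a (1:ℝ) a' else 0) =
        ∑ b' : Fin m, if G.Reachable v (Sum.inr b') then Pi.single b (1:ℝ) b' else 0
      rw [sum_ite_single a (fun a' => G.Reachable v (Sum.inl a')),
        sum_ite_single b (fun b' => G.Reachable v (Sum.inr b')), if_congr hiff rfl rfl]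
    have : Submodule.span ℝ A ≤ LinearMap.ker (phiAux G v) := by
      rw [Submodule.span_le]
      intro x hx
      exact LinearMap.mem_ker.2 (h0 x hx)
    have := this hp
    rw [LinearMap.mem_ker, phiAux_apply, sub_eq_zero] at this
    exact this
  · -- kernel conditions ⊆ span
    intro hp
    rw [← Subspace.dualAnnihilator_dualCoannihilator_eq (W := Submodule.span ℝ A),
      Submodule.mem_dualCoannihilator]
    intro φ hφ
    rw [Submodule.mem_dualAnnihilator] at hφ
    -- the functional values on the basis vectors
    set x : Fin m → ℝ := fun a => φ (Pi.single a 1, 0) with hx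
    set y : Fin m → ℝ := fun b => φ (0, Pi.single b 1) with hy
    -- `f` is constant on connected components
    set f : (Fin m ⊕ Fin m) → ℝ := fun v => Sum.elim x (fun b => -(y b)) v with hf
    have hedge : ∀ u w, G.Adj u w → f u = f w := by
      have base : ∀ a b : Fin m, (Pi.single a 1, Pi.single b 1) ∈ A →
          f (Sum.inl a) = f (Sum.inr b) := by
        intro a b hab
        have h1 : φ (Pi.single a 1, Pi.single b 1) = 0 :=
          hφ _ (Submodule.subset_span hab)
        have h2 : ((Pi.single a 1 : Fin m → ℝ), (Pi.single b 1 : Fin m → ℝ)) =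
            (Pi.single a 1, 0) + (0, Pi.single b 1) := by
          simp [Prod.ext_iff]
        rw [h2, map_add] at h1
        simp only [hf, Sum.elim_inl, Sum.elim_inr, hx, hy]
        linarith
      intro u w huw
      rw [hG, Hgraph, SimpleGraph.fromRel_adj] at huw
      obtain ⟨-, ⟨a, b, hab, rfl, rfl⟩ | ⟨a, b, hab, rfl, rfl⟩⟩ := huw
      · exact base a b hab
      · exact (base a b hab).symm
    have hwalk : ∀ (u w : Fin m ⊕ Fin m), G.Walk u w → f u = f w := by
      intro u w pw
      induction pw with
      | nil => rfl
      | cons hadjstep _ ih => exact (hedge _ _ hadjstep).trans ih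
    have hreach : ∀ u w, G.Reachable u w → f u = f w := fun u w h => h.elim (hwalk u w)
    -- the representative map
    let r : (Fin m ⊕ Fin m) → (Fin m ⊕ Fin m) := repAux G
    have hrreach : ∀ v, G.Reachable (r v) v := fun v => repAux_reachable G v
    have hreq : ∀ u v, G.Reachable u v → r u = r v := fun u v h => repAux_eq_of_reachable h
    have hridem : ∀ v, r (r v) = r v := fun v => repAux_idem G v
    -- fibers of `r` : sums match
    have hfib : ∀ v : Fin m ⊕ Fin m,
        (∑ a ∈ univ.filter fun a => r (Sum.inl a) = v, p.1 a) =
          ∑ b ∈ univ.filter fun b => r (Sum.inr b) = v, p.2 b := by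
      intro v
      by_cases hv : r v = v
      · have hcond1 : ∀ a : Fin m, (r (Sum.inl a) = v) ↔ G.Reachable v (Sum.inl a) := by
          intro a
          constructor
          · intro h; rw [← h]; exact hrreach _
          · intro h
            rw [hreq _ _ h.symm, hv]
        have hcond2 : ∀ b : Fin m, (r (Sum.inr b) = v) ↔ G.Reachable v (Sum.inr b) := by
          intro b
          constructor
          · intro h; rw [← h]; exact hrreach _
          · intro h
            rw [hreq _ _ h.symm, hv]
        have := hp v
        rw [← sub_eq_zero, ← phiAux_apply] at this
        have := sub_eq_zero.1 this
        calc (∑ a ∈ univ.filter fun a => r (Sum.inl a) = v, p.1 a)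
            = ∑ a ∈ univ.filter fun a => G.Reachable v (Sum.inl a), p.1 a := by
              apply Finset.sum_congr _ (fun _ _ => rfl)
              apply Finset.filter_congr
              intro a _; simp [hcond1 a]
          _ = ∑ b ∈ univ.filter fun b => G.Reachable v (Sum.inr b), p.2 b := this
          _ = ∑ b ∈ univ.filter fun b => r (Sum.inr b) = v, p.2 b := by
              apply Finset.sum_congr _ (fun _ _ => rfl)
              apply Finset.filter_congr
              intro b _; simp [hcond2 b]
      · have hempty : ∀ u : Fin m ⊕ Fin m, r u ≠ v := by
          intro u h
          apply hv
          rw [← h, hridem u, h]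
        rw [Finset.filter_false_of_mem (fun a _ => hempty _),
          Finset.filter_false_of_mem (fun b _ => hempty _)]
        simp
    -- expand p in the standard basis
    have hpeq : p = (∑ a : Fin m, p.1 a • ((Pi.single a 1 : Fin m → ℝ), (0 : Fin m → ℝ)))
        + ∑ b : Fin m, p.2 b • ((0 : Fin m → ℝ), (Pi.single b 1 : Fin m → ℝ)) := by
      refine Prod.ext ?_ ?_ <;> funext j <;>
        simp [Prod.fst_sum, Prod.snd_sum, Finset.sum_apply, Pi.single_apply, mul_ite,
          Finset.sum_ite_eq']
    have hφp : φ p = (∑ a : Fin m, p.1 a * x a) + ∑ b : Fin m, p.2 b * y b := by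
      conv_lhs => rw [hpeq]
      simp only [map_add, map_sum, map_smul, smul_eq_mul, hx, hy]
    rw [hφp]
    have hfa : ∀ a : Fin m, x a = f (r (Sum.inl a)) := by
      intro a
      have h1 := hreach _ _ (hrreach (Sum.inl a))
      have h2 : f (Sum.inl a) = x a := rfl
      rw [h1, h2]
    have hfb : ∀ b : Fin m, y b = -f (r (Sum.inr b)) := by
      intro b
      have h1 := hreach _ _ (hrreach (Sum.inr b))
      have h2 : f (Sum.inr b) = -(y b) := rfl
      rw [h1, h2, neg_neg]
    -- group by fibers of `r`
    have h1 : (∑ a : Fin m, p.1 a * x a) =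
        ∑ v : Fin m ⊕ Fin m, f v * ∑ a ∈ univ.filter fun a => r (Sum.inl a) = v, p.1 a := by
      rw [← Finset.sum_fiberwise_of_maps_to (g := fun a => r (Sum.inl a))
        (t := (univ : Finset (Fin m ⊕ Fin m))) (fun a _ => Finset.mem_univ _)
        (fun a => p.1 a * x a)]
      refine Finset.sum_congr rfl fun v _ => ?_
      rw [Finset.mul_sum]
      refine Finset.sum_congr rfl fun a ha => ?_
      rw [Finset.mem_filter] at ha
      rw [hfa a, ha.2, mul_comm]
    have h2 : (∑ b : Fin m, p.2 b * y b) =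
        ∑ v : Fin m ⊕ Fin m, -(f v * ∑ b ∈ univ.filter fun b => r (Sum.inr b) = v, p.2 b) := by
      rw [← Finset.sum_fiberwise_of_maps_to (g := fun b => r (Sum.inr b))
        (t := (univ : Finset (Fin m ⊕ Fin m))) (fun b _ => Finset.mem_univ _)
        (fun b => p.2 b * y b)]
      refine Finset.sum_congr rfl fun v _ => ?_
      rw [Finset.mul_sum, ← Finset.sum_neg_distrib]
      refine Finset.sum_congr rfl fun b hb => ?_
      rw [Finset.mem_filter] at hb
      rw [hfb b, hb.2]; ring
    rw [h1, h2, ← Finset.sum_add_distrib]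
    apply Finset.sum_eq_zero
    intro v _
    rw [hfib v]; ring

end Aux

open scoped Classical in
/-- The intersection of the spans of affinely independent sets of
product-simplex vertices equals the set of `(α, β)` whose component-wise
sums match on every connected component of each graph `H(A i)` (components
being described by reachability from an arbitrary vertex `v`). -/
theorem stmt_16 {m n : ℕ} (A : Fin n → Set ((Fin m → ℝ) × (Fin m → ℝ)))
    (hA : ∀ i, A i ⊆ {v | ∃ a b : Fin m, v = (Pi.single a 1, Pi.single b 1)})
    (haff : ∀ i, AffineIndependent ℝ ((↑) : A i → ((Fin m → ℝ) × (Fin m → ℝ)))) :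
    (⋂ i, (Submodule.span ℝ (A i) : Set ((Fin m → ℝ) × (Fin m → ℝ)))) =
      {p | ∀ (i : Fin n) (v : Fin m ⊕ Fin m),
        (∑ a : Fin m, if (Hgraph (A i)).Reachable v (Sum.inl a) then p.1 a else 0) =
        (∑ b : Fin m, if (Hgraph (A i)).Reachable v (Sum.inr b) then p.2 b else 0)} := by
  ext p
  simp only [Set.mem_iInter, SetLike.mem_coe, Set.mem_setOf_eq]
  exact forall_congr' fun i => key (A i) (hA i) p
end

section
/- Let p = (p₁, …, pₙ) ∈ Dist(D_n, m) be a distribution on the dipole graph with n edges and m outcomes, and for each i let H_i be the bipartite simple graph on {u_0, …, u_{m−1}} ⊔ {w_0, …, w_{m−1}} with an edge between u_a and w_b iff (p_i)_{ab} ≠ 0. Then p is an extreme point of Dist(D_n, m) if and only if: (1) every H_i contains no cycle, and (2) the linear subspace K := {(α, β) ∈ ℝ^m × ℝ^m : for every i and every connected component C of H_i (including singleton components), Σ_{a : u_a ∈ C} α_a = Σ_{b : w_b ∈ C} β_b} has dimension exactly 1. (Since K is the kernel of the N×2m matrix Q(H₁, …, Hₙ), condition (2) is equivalent to rank Q(H₁,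 …, Hₙ) = 2m − 1.) -/
/-- The bipartite graph associated to an `m × m` matrix `q`: vertices
`Sum.inl a` (left, `u_a`) and `Sum.inr b` (right, `w_b`), with an edge between
`u_a` and `w_b` iff `q a b ≠ 0`. -/
def Hmat {m : ℕ} (q : Matrix (Fin m) (Fin m) ℝ) : SimpleGraph (Fin m ⊕ Fin m) :=
  SimpleGraph.fromRel (fun v w =>
    ∃ a b : Fin m, q a b ≠ 0 ∧ v = Sum.inl a ∧ w = Sum.inr b)

open Finset SimpleGraph Sum
open scoped Classical

open Filter Topology in
lemma exists_pos_mul_abs_le {ι : Type*} [Finite ι] {f g : ι → ℝ} (hf : ∀ i, 0 ≤ f i)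
    (hfg : ∀ i, f i = 0 → g i = 0) : ∃ ε > 0, ∀ i, ε * |g i| ≤ f i := by
  have h (i : ι) : ∀ᶠ ε in 𝓝 (0 : ℝ), ε * |g i| ≤ f i := by
    rcases (hf i).eq_or_lt with h | h
    · exact Eventually.of_forall fun ε => by simp [hfg i h.symm, ← h]
    · exact ((continuous_mul_const |g i|).tendsto' 0 0 (zero_mul _)).eventually
        (eventually_le_nhds h)
  obtain ⟨ε, hε, hεpos⟩ := ((eventually_all.2 h).filter_mono nhdsWithin_le_nhds |>.and
    self_mem_nhdsWithin).exists (f := 𝓝[>] (0 : ℝ))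
  exact ⟨ε, hεpos, hε⟩

lemma eq_zero_of_mem_extremePoints_of_add_mem_of_sub_mem {𝕜 E : Type*} [Field 𝕜]
    [LinearOrder 𝕜] [IsStrictOrderedRing 𝕜] [AddCommGroup E] [Module 𝕜 E] {A : Set E}
    {x v : E} (hx : x ∈ A.extremePoints 𝕜) (h₁ : x + v ∈ A) (h₂ : x - v ∈ A) : v = 0 := by
  have : x ∈ openSegment 𝕜 (x + v) (x - v) :=
    ⟨1 / 2, 1 / 2, by norm_num, by norm_num, by norm_num, by module⟩
  simpa using hx.2 h₁ h₂ this

lemma eq_zero_of_mem_span_singleton_of_map_eq_zero {K M : Type*} [Field K] [AddCommGroup M]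
    [Module K M] {z w y : M} (f : M →ₗ[K] K) (hw : w ∈ K ∙ z) (hfw : f w ≠ 0)
    (hy : y ∈ K ∙ z) (hfy : f y = 0) : y = 0 := by
  obtain ⟨c, rfl⟩ := Submodule.mem_span_singleton.1 hy
  obtain ⟨c', rfl⟩ := Submodule.mem_span_singleton.1 hw
  simp only [map_smul, smul_eq_mul] at hfw hfy
  simp [(mul_eq_zero.1 hfy).resolve_right (right_ne_zero_of_mul hfw)]

section Margins

variable {ι κ R : Type*} [Fintype ι] [Fintype κ]

def margins [Semiring R] : Matrix ι κ R →ₗ[R] (ι → R) × (κ → R) where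
  toFun x := (fun a => ∑ b, x a b, fun b => ∑ a, x a b)
  map_add' x y := by ext <;> simp [Finset.sum_add_distrib]
  map_smul' c x := by ext <;> simp [Finset.mul_sum]

@[simp]
lemma margins_fst_apply [Semiring R] (x : Matrix ι κ R) (a : ι) :
    (margins x).1 a = ∑ b, x a b := rfl

@[simp]
lemma margins_snd_apply [Semiring R] (x : Matrix ι κ R) (b : κ) :
    (margins x).2 b = ∑ a, x a b := rfl

lemma margins_single [Semiring R] [DecidableEq ι] [DecidableEq κ] (a : ι) (b : κ) (c : R) :
    margins (Matrix.single a b c) = (Pi.single a c, Pi.single b c) := by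
  ext <;> simp [Matrix.single_apply, Pi.single_apply, ite_and, eq_comm]

lemma sum_ite_margins_sub_sum_ite_margins [Ring R] (x : Matrix ι κ R) (P : ι ⊕ κ → Prop)
    [DecidablePred P] :
    (∑ a, if P (inl a) then (margins x).1 a else 0) -
        ∑ b, (if P (inr b) then (margins x).2 b else 0) =
      ∑ a, ∑ b, ((if P (inl a) then x a b else 0) - if P (inr b) then x a b else 0) := by
  simp only [margins_fst_apply, margins_snd_apply, Finset.sum_sub_distrib]
  rw [Finset.sum_comm (f := fun a b => if P (inr b) then x a b else 0)]
  simp [Finset.sum_ite_irrel]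

end Margins

section BipartiteFlows

variable {ι κ R : Type*} {G H : SimpleGraph (ι ⊕ κ)}

def edgeSupported [Semiring R] (G : SimpleGraph (ι ⊕ κ)) : Submodule R (Matrix ι κ R) where
  carrier := {x | ∀ a b, ¬G.Adj (inl a) (inr b) → x a b = 0}
  add_mem' hx hy a b h := by simp [hx a b h, hy a b h]
  zero_mem' _ _ _ := rfl
  smul_mem' c x hx a b h := by simp [hx a b h]

lemma mem_edgeSupported [Semiring R] {x : Matrix ι κ R} :
    x ∈ edgeSupported G ↔ ∀ a b, ¬G.Adj (inl a) (inr b) → x a b = 0 := Iff.rfl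

lemma edgeSupported_mono [Semiring R] (h : G ≤ H) :
    edgeSupported G ≤ (edgeSupported H : Submodule R (Matrix ι κ R)) :=
  fun _ hx a b hab => hx a b fun hG => hab (h hG)

variable [DecidableEq ι] [DecidableEq κ]

lemma single_mem_edgeSupported [Semiring R] {a : ι} {b : κ} (h : G.Adj (inl a) (inr b)) (c : R) :
    Matrix.single a b c ∈ edgeSupported G := by
  intro a' b' hab
  have : ¬(a = a' ∧ b = b') := by rintro ⟨rfl, rfl⟩; exact hab h
  simp [this]

variable (R) in
def vertexCharge [Ring R] : ι ⊕ κ → (ι → R) × (κ → R)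
  | inl a => (Pi.single a 1, 0)
  | inr b => (0, -Pi.single b 1)

variable (R) in
def dartMatrix [Ring R] : ι ⊕ κ → ι ⊕ κ → Matrix ι κ R
  | inl a, inr b => Matrix.single a b 1
  | inr b, inl a => -Matrix.single a b 1
  | _, _ => 0

lemma dartMatrix_apply_eq_zero [Ring R] {u v : ι ⊕ κ} {a : ι} {b : κ}
    (h : s(u, v) ≠ s(inl a, inr b)) : dartMatrix R u v a b = 0 := by
  cases u <;> cases v <;> simp_all [dartMatrix, Sym2.eq_swap]

variable (R) in
def SimpleGraph.Walk.signedFlow [Ring R] : ∀ {u v : ι ⊕ κ}, G.Walk u v → Matrix ι κ R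
  | _, _, .nil => 0
  | u, _, .cons (v := v) _ w => dartMatrix R u v + w.signedFlow

lemma SimpleGraph.Walk.signedFlow_mem_edgeSupported [Ring R] {u v : ι ⊕ κ} (w : G.Walk u v) :
    w.signedFlow R ∈ edgeSupported G := by
  induction w with
  | nil => exact zero_mem _
  | @cons u v _ h w ih =>
    intro a b hab
    have : s(u, v) ≠ s(inl a, inr b) := fun he =>
      hab (by rw [← SimpleGraph.mem_edgeSet, ← he]; exact h)
    simp [signedFlow, dartMatrix_apply_eq_zero this, ih a b hab]

variable [Fintype ι] [Fintype κ]

lemma margins_dartMatrix [Ring R] {u v : ι ⊕ κ} (h : (completeBipartiteGraph ι κ).Adj u v) :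
    margins (dartMatrix R u v) = vertexCharge R u - vertexCharge R v := by
  cases u <;> cases v <;>
    simp_all [completeBipartiteGraph, dartMatrix, vertexCharge, margins_single]

lemma SimpleGraph.Walk.margins_signedFlow [Ring R] (hG : G ≤ completeBipartiteGraph ι κ)
    {u v : ι ⊕ κ} (w : G.Walk u v) :
    margins (w.signedFlow R) = vertexCharge R u - vertexCharge R v := by
  induction w with
  | nil => simp [signedFlow]
  | cons h w ih => rw [signedFlow, map_add, ih, margins_dartMatrix (hG h)]; abel

lemma exists_ne_zero_of_not_isBridge [Ring R] [Nontrivial R]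
    (hG : G ≤ completeBipartiteGraph ι κ)
    {a : ι} {b : κ} (hadj : G.Adj (inl a) (inr b)) (hb : ¬G.IsBridge s(inl a, inr b)) :
    ∃ x ∈ (edgeSupported G : Submodule R (Matrix ι κ R)), margins x = 0 ∧ x ≠ 0 := by
  set G' := G.deleteEdges {s(inl a, inr b)}
  obtain ⟨w⟩ : G'.Reachable (inr b) (inl a) := (not_not.1 (isBridge_iff.not.1 hb)).symm
  have hG' : G' ≤ G := deleteEdges_le _
  refine ⟨Matrix.single a b 1 + w.signedFlow R, add_mem (single_mem_edgeSupported hadj 1)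
    (edgeSupported_mono hG' w.signedFlow_mem_edgeSupported), ?_, fun h0 => ?_⟩
  · rw [map_add, margins_single, w.margins_signedFlow (hG'.trans hG)]
    simp [vertexCharge]
  · have hab : ¬G'.Adj (inl a) (inr b) := by simp [G']
    simpa [w.signedFlow_mem_edgeSupported a b hab] using congrFun (congrFun h0 a) b

def componentBalanced [Semiring R] (G : SimpleGraph (ι ⊕ κ)) :
    Submodule R ((ι → R) × (κ → R)) where
  carrier := {q | ∀ v, (∑ a, if G.Reachable v (inl a) then q.1 a else 0) =
    ∑ b, if G.Reachable v (inr b) then q.2 b else 0}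
  add_mem' hq hq' v := by simp [ite_add_zero, Finset.sum_add_distrib, hq v, hq' v]
  zero_mem' _ := by simp
  smul_mem' c q hq v := by simpa [Finset.mul_sum, mul_ite] using congrArg (c * ·) (hq v)

lemma margins_mem_componentBalanced [Ring R] {x : Matrix ι κ R} (hx : x ∈ edgeSupported G) :
    margins x ∈ componentBalanced G := by
  intro v
  rw [← sub_eq_zero, sum_ite_margins_sub_sum_ite_margins]
  refine Finset.sum_eq_zero fun a _ => Finset.sum_eq_zero fun b _ => ?_
  by_cases hab : G.Adj (inl a) (inr b)
  · have : G.Reachable v (inl a) ↔ G.Reachable v (inr b) :=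
      ⟨fun h => h.trans hab.reachable, fun h => h.trans hab.symm.reachable⟩
    simp [this]
  · simp [hx a b hab]

lemma apply_eq_zero_of_isBridge [Ring R] {x : Matrix ι κ R} (hx : x ∈ edgeSupported G)
    (h0 : margins x = 0) {a : ι} {b : κ} (hb : G.IsBridge s(inl a, inr b)) : x a b = 0 := by
  set G' := G.deleteEdges {s(inl a, inr b)}
  have key := sum_ite_margins_sub_sum_ite_margins x (G'.Reachable (inl a))
  rw [h0] at key
  simp only [Prod.fst_zero, Prod.snd_zero, Pi.zero_apply, ite_self, sum_const_zero, sub_zero,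
    ← Fintype.sum_prod_type'] at key
  rw [Fintype.sum_eq_single (a, b), if_pos (Reachable.refl _), if_neg (isBridge_iff.1 hb),
    sub_zero] at key
  · exact key.symm
  rintro ⟨a', b'⟩ hne
  by_cases hab : G.Adj (inl a') (inr b')
  · have hadj : G'.Adj (inl a') (inr b') := by
      simpa [G', hab] using fun h₁ h₂ => hne (by rw [h₁, h₂])
    have : G'.Reachable (inl a) (inl a') ↔ G'.Reachable (inl a) (inr b') :=
      ⟨fun h => h.trans hadj.reachable, fun h => h.trans hadj.symm.reachable⟩
    simp [this]
  · simp [hx a' b' hab]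

theorem isAcyclic_iff_forall_margins_eq_zero [Ring R] [Nontrivial R]
    (hG : G ≤ completeBipartiteGraph ι κ) :
    G.IsAcyclic ↔
      ∀ x ∈ (edgeSupported G : Submodule R (Matrix ι κ R)), margins x = 0 → x = 0 := by
  rw [isAcyclic_iff_forall_adj_isBridge]
  refine ⟨fun hbr x hx h0 => ?_, fun h u v huv => ?_⟩
  · ext a b
    by_cases hab : G.Adj (inl a) (inr b)
    exacts [apply_eq_zero_of_isBridge hx h0 (hbr hab), hx a b hab]
  · have key {a : ι} {b : κ} (hadj : G.Adj (inl a) (inr b)) : G.IsBridge s(inl a, inr b) := by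
      by_contra hb
      obtain ⟨x, hx, h0, hne⟩ := exists_ne_zero_of_not_isBridge (R := R) hG hadj hb
      exact hne (h x hx h0)
    have := hG huv
    cases u <;> cases v <;> simp only [completeBipartiteGraph, isLeft_inl, isRight_inl,
      isLeft_inr, isRight_inr] at this <;> simp at this
    · exact key huv
    · rw [Sym2.eq_swap]; exact key huv.symm

lemma sum_mul_eq_sum_connectedComponent [Semiring R] {α : Type*} [Fintype α]
    (e : α → ι ⊕ κ) (f : α → R) {h : ι ⊕ κ → R}
    (hh : ∀ u v, G.Reachable u v → h u = h v) :
    ∑ a, h (e a) * f a = ∑ C : G.ConnectedComponent,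
      h (Quot.out C) * ∑ a, if G.Reachable (Quot.out C) (e a) then f a else 0 := by
  simp_rw [Finset.mul_sum, mul_ite, mul_zero]
  rw [Finset.sum_comm]
  refine Finset.sum_congr rfl fun a _ => ?_
  have hC (C : G.ConnectedComponent) :
      G.Reachable (Quot.out C) (e a) ↔ C = G.connectedComponentMk (e a) := by
    rw [← ConnectedComponent.eq]; exact iff_of_eq (congrArg (· = _) (Quot.out_eq C))
  simp_rw [hC, Finset.sum_ite_eq', Finset.mem_univ, if_true]
  rw [hh _ _ ((hC _).2 rfl)]

lemma sum_mul_fst_eq_sum_mul_snd [Semiring R] {q : (ι → R) × (κ → R)}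
    (hq : q ∈ componentBalanced G) {h : ι ⊕ κ → R}
    (hh : ∀ u v, G.Reachable u v → h u = h v) :
    ∑ a, h (inl a) * q.1 a = ∑ b, h (inr b) * q.2 b := by
  rw [sum_mul_eq_sum_connectedComponent inl _ hh, sum_mul_eq_sum_connectedComponent inr _ hh]
  simp only [hq _]

theorem map_margins_edgeSupported {K : Type*} [Field K] (hG : G ≤ completeBipartiteGraph ι κ) :
    (edgeSupported G).map (margins : Matrix ι κ K →ₗ[K] _) = componentBalanced G := by
  refine le_antisymm (Submodule.map_le_iff_le_comap.2 fun x hx =>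
    margins_mem_componentBalanced hx) fun q hq => ?_
  by_contra hq'
  obtain ⟨φ, hφq, hφ⟩ := Submodule.exists_dual_map_eq_bot_of_notMem hq' inferInstance
  set h : ι ⊕ κ → K :=
    Sum.elim (fun a => φ (Pi.single a 1, 0)) (fun b => -φ (0, Pi.single b 1))
  have hedge {a : ι} {b : κ} (hab : G.Adj (inl a) (inr b)) : h (inl a) = h (inr b) := by
    have hy := Submodule.mem_map_of_mem (f := margins) (single_mem_edgeSupported hab (1 : K))
    have : φ (margins (Matrix.single a b 1)) = 0 :=
      (Submodule.mem_bot K).1 (hφ ▸ Submodule.mem_map_of_mem hy)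
    rw [margins_single, show ((Pi.single a 1, Pi.single b 1) : (ι → K) × (κ → K)) =
      (Pi.single a 1, 0) + (0, Pi.single b 1) by simp, map_add] at this
    simp only [h, elim_inl, elim_inr]
    linear_combination this
  have hreach : ∀ u v, G.Reachable u v → h u = h v := by
    rintro u v ⟨w⟩
    induction w with
    | nil => rfl
    | @cons u v _ huv _ ih =>
      refine Eq.trans ?_ ih
      have := hG huv
      cases u <;> cases v <;> simp [completeBipartiteGraph] at this
      exacts [hedge huv, (hedge huv.symm).symm]
  have hq_eq : q = ∑ a, q.1 a • ((Pi.single a 1, 0) : (ι → K) × (κ → K)) +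
      ∑ b, q.2 b • ((0, Pi.single b 1) : (ι → K) × (κ → K)) := by
    ext x <;> simp [Prod.fst_sum, Prod.snd_sum, Pi.single_apply]
  apply hφq
  calc φ q = ∑ a, h (inl a) * q.1 a - ∑ b, h (inr b) * q.2 b := by
        conv_lhs => rw [hq_eq]
        simp only [map_add, map_sum, map_smul, smul_eq_mul]
        simp [h, mul_comm, sub_eq_add_neg]
    _ = 0 := by rw [sum_mul_fst_eq_sum_mul_snd hq hreach, sub_self]

end BipartiteFlows

section Dipole

variable {n m : ℕ} {p d : Fin n → Matrix (Fin m) (Fin m) ℝ}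

lemma mem_dipoleDist_iff :
    p ∈ DipoleDist n m ↔ (∀ i a b, 0 ≤ p i a b) ∧ (∀ i, ∑ a, ∑ b, p i a b = 1) ∧
      ∀ i j, margins (p i) = margins (p j) := by
  simp only [DipoleDist, Set.mem_ofPred_eq, Prod.ext_iff, funext_iff, margins_fst_apply,
    margins_snd_apply, forall_and]

lemma hmat_adj {q : Matrix (Fin m) (Fin m) ℝ} {a b : Fin m} :
    (Hmat q).Adj (inl a) (inr b) ↔ q a b ≠ 0 := by
  simp [Hmat, fromRel_adj]

lemma hmat_le_completeBipartiteGraph (q : Matrix (Fin m) (Fin m) ℝ) :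
    Hmat q ≤ completeBipartiteGraph (Fin m) (Fin m) := by
  rintro u v ⟨-, ⟨a, b, -, rfl, rfl⟩ | ⟨a, b, -, rfl, rfl⟩⟩ <;>
    simp [completeBipartiteGraph]

lemma mem_edgeSupported_hmat {q x : Matrix (Fin m) (Fin m) ℝ} :
    x ∈ edgeSupported (Hmat q) ↔ ∀ a b, q a b = 0 → x a b = 0 := by
  simp [mem_edgeSupported, hmat_adj]

structure IsFeasibleDirection (p d : Fin n → Matrix (Fin m) (Fin m) ℝ) : Prop where
  mem_edgeSupported : ∀ i, d i ∈ edgeSupported (Hmat (p i))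
  margins_eq : ∀ i j, margins (d i) = margins (d j)
  sum_eq_zero : ∀ i, ∑ a, ∑ b, d i a b = 0

lemma IsFeasibleDirection.add_smul_mem (hp : p ∈ DipoleDist n m) (hd : IsFeasibleDirection p d)
    {t : ℝ} (ht : ∀ i a b, |t| * |d i a b| ≤ p i a b) : p + t • d ∈ DipoleDist n m := by
  obtain ⟨hpos, hsum, hmarg⟩ := mem_dipoleDist_iff.1 hp
  refine mem_dipoleDist_iff.2 ⟨fun i a b => ?_, fun i => ?_, fun i j => ?_⟩
  · have := ht i a b
    rw [← abs_mul] at this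
    simp only [Pi.add_apply, Pi.smul_apply, Matrix.add_apply, Matrix.smul_apply, smul_eq_mul]
    linarith [neg_abs_le (t * d i a b)]
  · simp [Finset.sum_add_distrib, ← Finset.mul_sum, hsum i, hd.sum_eq_zero i]
  · simp [hmarg i j, hd.margins_eq i j]

lemma isFeasibleDirection_sub {x₁ x₂ : Fin n → Matrix (Fin m) (Fin m) ℝ}
    (h₁ : x₁ ∈ DipoleDist n m) (h₂ : x₂ ∈ DipoleDist n m) {s t : ℝ} (hs : 0 < s)
    (ht : 0 < t) :
    IsFeasibleDirection (s • x₁ + t • x₂) (x₁ - x₂) := by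
  obtain ⟨hpos₁, hsum₁, hmarg₁⟩ := mem_dipoleDist_iff.1 h₁
  obtain ⟨hpos₂, hsum₂, hmarg₂⟩ := mem_dipoleDist_iff.1 h₂
  refine ⟨fun i => mem_edgeSupported_hmat.2 fun a b h => ?_, fun i j => ?_, fun i => ?_⟩
  · simp only [Pi.add_apply, Pi.smul_apply, Matrix.add_apply, Matrix.smul_apply,
      smul_eq_mul] at h
    obtain ⟨e₁, e₂⟩ := (add_eq_zero_iff_of_nonneg (mul_nonneg hs.le (hpos₁ i a b))
      (mul_nonneg ht.le (hpos₂ i a b))).1 h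
    simp_all [hs.ne', ht.ne']
  · simp [hmarg₁ i j, hmarg₂ i j]
  · simp [Finset.sum_sub_distrib, hsum₁, hsum₂]

lemma mem_extremePoints_dipoleDist_iff (hp : p ∈ DipoleDist n m) :
    p ∈ (DipoleDist n m).extremePoints ℝ ↔ ∀ d, IsFeasibleDirection p d → d = 0 := by
  refine ⟨fun hext d hd => ?_, fun h => ⟨hp, fun x₁ h₁ x₂ h₂ hseg => ?_⟩⟩
  · obtain ⟨ε, hε, hεd⟩ := exists_pos_mul_abs_le
      (f := fun t : Fin n × Fin m × Fin m => p t.1 t.2.1 t.2.2) (g := fun t => d t.1 t.2.1 t.2.2)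
      (fun t => (mem_dipoleDist_iff.1 hp).1 _ _ _)
      (fun t => mem_edgeSupported_hmat.1 (hd.mem_edgeSupported t.1) _ _)
    have hbound {s : ℝ} (hs : |s| = ε) (i a b) : |s| * |d i a b| ≤ p i a b :=
      hs ▸ hεd (i, a, b)
    have hadd := hd.add_smul_mem hp (hbound (abs_of_pos hε))
    have hsub := hd.add_smul_mem hp (hbound (s := -ε) (by simp [abs_of_pos hε]))
    rw [neg_smul, ← sub_eq_add_neg] at hsub
    exact (smul_eq_zero.1 (eq_zero_of_mem_extremePoints_of_add_mem_of_sub_mem hext hadd hsub)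
      ).resolve_left hε.ne'
  · obtain ⟨s, t, hs, ht, hst, rfl⟩ := hseg
    obtain rfl := sub_eq_zero.1 (h _ (isFeasibleDirection_sub h₁ h₂ hs ht))
    rw [← add_smul, hst, one_smul]

/-- The subspace `K` of the paper. -/
def balanceSpace (p : Fin n → Matrix (Fin m) (Fin m) ℝ) :
    Submodule ℝ ((Fin m → ℝ) × (Fin m → ℝ)) :=
  ⨅ i, componentBalanced (Hmat (p i))

lemma coe_balanceSpace (p : Fin n → Matrix (Fin m) (Fin m) ℝ) :
    (balanceSpace p : Set ((Fin m → ℝ) × (Fin m → ℝ))) =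
      {q | ∀ (i : Fin n) (v : Fin m ⊕ Fin m),
        (∑ a : Fin m, if (Hmat (p i)).Reachable v (Sum.inl a) then q.1 a else 0) =
        (∑ b : Fin m, if (Hmat (p i)).Reachable v (Sum.inr b) then q.2 b else 0)} :=
  Set.ext fun _ => Submodule.mem_iInf _

lemma margins_mem_balanceSpace_of_edgeSupported {x : Matrix (Fin m) (Fin m) ℝ}
    (hx : ∀ i, ∃ y ∈ edgeSupported (Hmat (p i)), margins y = margins x) :
    margins x ∈ balanceSpace p :=
  Submodule.mem_iInf _ |>.2 fun i => by
    obtain ⟨y, hy, hyx⟩ := hx i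
    exact hyx ▸ margins_mem_componentBalanced hy

lemma margins_mem_balanceSpace_of_mem_dipoleDist (hp : p ∈ DipoleDist n m) (i : Fin n) :
    margins (p i) ∈ balanceSpace p :=
  margins_mem_balanceSpace_of_edgeSupported fun j =>
    ⟨p j, mem_edgeSupported_hmat.2 fun _ _ h => h, (mem_dipoleDist_iff.1 hp).2.2 j i⟩

lemma margins_ne_zero_of_mem_dipoleDist (hp : p ∈ DipoleDist n m) (i : Fin n) :
    margins (p i) ≠ 0 := by
  intro h0
  have := congrArg (fun q => ∑ a, q.1 a) h0
  simp [(mem_dipoleDist_iff.1 hp).2.1] at this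

lemma IsFeasibleDirection.margins_mem_balanceSpace (hd : IsFeasibleDirection p d) (i : Fin n) :
    margins (d i) ∈ balanceSpace p :=
  margins_mem_balanceSpace_of_edgeSupported fun j =>
    ⟨d j, hd.mem_edgeSupported j, hd.margins_eq j i⟩

lemma isAcyclic_of_forall_isFeasibleDirection (h : ∀ d, IsFeasibleDirection p d → d = 0)
    (i : Fin n) : (Hmat (p i)).IsAcyclic := by
  refine (isAcyclic_iff_forall_margins_eq_zero (R := ℝ) (hmat_le_completeBipartiteGraph _)).2
    fun x hx h0 => ?_
  set d : Fin n → Matrix (Fin m) (Fin m) ℝ := Pi.single i x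
  have hmarg (j : Fin n) : margins (d j) = 0 := by
    by_cases hj : j = i
    · subst hj; simpa [d] using h0
    · simp [d, hj]
  have hd : IsFeasibleDirection p d := by
    refine ⟨fun j => ?_, fun j k => by rw [hmarg j, hmarg k], fun j => ?_⟩
    · by_cases hj : j = i
      · subst hj; simpa [d] using hx
      · simp [d, hj, zero_mem]
    · simpa using congrArg (fun q => ∑ a, q.1 a) (hmarg j)
  simpa [d] using congrFun (h d hd) i

lemma balanceSpace_eq_span (hp : p ∈ DipoleDist n m)
    (h : ∀ d, IsFeasibleDirection p d → d = 0) (i₀ : Fin n) :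
    balanceSpace p = ℝ ∙ margins (p i₀) := by
  refine le_antisymm (fun q hq => ?_)
    ((Submodule.span_singleton_le_iff_mem _ _).2
      (margins_mem_balanceSpace_of_mem_dipoleDist hp i₀))
  set q' := q - (∑ a, q.1 a) • margins (p i₀)
  have hq' : q' ∈ balanceSpace p :=
    sub_mem hq (Submodule.smul_mem _ _ (margins_mem_balanceSpace_of_mem_dipoleDist hp i₀))
  have hq'sum : ∑ a, q'.1 a = 0 := by
    simp [q', Finset.sum_sub_distrib, ← Finset.mul_sum, (mem_dipoleDist_iff.1 hp).2.1 i₀]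
  have hx (i : Fin n) : ∃ x ∈ edgeSupported (Hmat (p i)), margins x = q' := by
    rw [← Submodule.mem_map, map_margins_edgeSupported (hmat_le_completeBipartiteGraph _)]
    exact Submodule.mem_iInf _ |>.1 hq' i
  choose x hx hxq using hx
  have hd : IsFeasibleDirection p x :=
    ⟨hx, fun i j => (hxq i).trans (hxq j).symm, fun i => by simpa [← hxq i] using hq'sum⟩
  have hq'0 : q' = 0 := by rw [← hxq i₀, h x hd]; simp
  exact Submodule.mem_span_singleton.2 ⟨_, (sub_eq_zero.1 hq'0).symm⟩

lemma IsFeasibleDirection.eq_zero (hp : p ∈ DipoleDist n m) (hd : IsFeasibleDirection p d)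
    (hac : ∀ i, (Hmat (p i)).IsAcyclic) {z : (Fin m → ℝ) × (Fin m → ℝ)}
    (hK : balanceSpace p = ℝ ∙ z) : d = 0 := by
  funext i
  let mass : (Fin m → ℝ) × (Fin m → ℝ) →ₗ[ℝ] ℝ :=
    (∑ a, LinearMap.proj a) ∘ₗ LinearMap.fst ℝ _ _
  have h0 : margins (d i) = 0 := by
    refine eq_zero_of_mem_span_singleton_of_map_eq_zero mass
      (hK ▸ margins_mem_balanceSpace_of_mem_dipoleDist hp i) ?_
      (hK ▸ hd.margins_mem_balanceSpace i) ?_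
    · simp [mass, (mem_dipoleDist_iff.1 hp).2.1 i]
    · simpa [mass] using hd.sum_eq_zero i
  exact (isAcyclic_iff_forall_margins_eq_zero (hmat_le_completeBipartiteGraph _)).1 (hac i) _
    (hd.mem_edgeSupported i) h0

end Dipole

open scoped Classical in
theorem stmt_17_general {n m : ℕ} (hn : 1 ≤ n)
    (p : Fin n → Matrix (Fin m) (Fin m) ℝ) (hp : p ∈ DipoleDist n m) :
    p ∈ Set.extremePoints ℝ (DipoleDist n m) ↔
      (∀ i, (Hmat (p i)).IsAcyclic) ∧
      ∃ z : (Fin m → ℝ) × (Fin m → ℝ), z ≠ 0 ∧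
        {q : (Fin m → ℝ) × (Fin m → ℝ) | ∀ (i : Fin n) (v : Fin m ⊕ Fin m),
          (∑ a : Fin m, if (Hmat (p i)).Reachable v (Sum.inl a) then q.1 a else 0) =
          (∑ b : Fin m, if (Hmat (p i)).Reachable v (Sum.inr b) then q.2 b else 0)} =
        Set.range (fun c : ℝ => c • z) := by
  rw [← coe_balanceSpace, mem_extremePoints_dipoleDist_iff hp]
  simp only [← Submodule.span_singleton_eq_range, SetLike.coe_set_eq]
  exact ⟨fun h => ⟨isAcyclic_of_forall_isFeasibleDirection h, margins (p ⟨0, hn⟩),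
    margins_ne_zero_of_mem_dipoleDist hp _, balanceSpace_eq_span hp h _⟩,
    fun ⟨hac, _, _, hK⟩ _ hd => hd.eq_zero hp hac hK⟩

open scoped Classical in
/-- Graph-theoretic characterization of the vertices of the dipole polytope:
`p` is extreme iff every support graph `H_i` is acyclic and the subspace `K`
of pairs `(α, β)` whose sums match on every connected component of every `H_i`
is one-dimensional (i.e. `K` is the set of multiples of a single nonzero
vector; equivalently `rank Q(H₁, …, Hₙ) = 2m - 1`). -/
theorem stmt_17 {n m : ℕ} (hn : 1 ≤ n) (hm : 2 ≤ m)
    (p : Fin n → Matrix (Fin m) (Fin m) ℝ) (hp : p ∈ DipoleDist n m) :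
    p ∈ Set.extremePoints ℝ (DipoleDist n m) ↔
      (∀ i, (Hmat (p i)).IsAcyclic) ∧
      ∃ z : (Fin m → ℝ) × (Fin m → ℝ), z ≠ 0 ∧
        {q : (Fin m → ℝ) × (Fin m → ℝ) | ∀ (i : Fin n) (v : Fin m ⊕ Fin m),
          (∑ a : Fin m, if (Hmat (p i)).Reachable v (Sum.inl a) then q.1 a else 0) =
          (∑ b : Fin m, if (Hmat (p i)).Reachable v (Sum.inr b) then q.2 b else 0)} =
        Set.range (fun c : ℝ => c • z) :=
  stmt_17_general hn p hp
end

section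
/- Let p = (p₁, …, pₙ) ∈ Dist(R_n, m) be a distribution on the rose graph with n loops and m outcomes, and for each i let H_i be the bipartite simple graph on {u_0, …, u_{m−1}} ⊔ {w_0, …, w_{m−1}} with an edge between u_a and w_b iff (p_i)_{ab} ≠ 0. Then p is an extreme point of Dist(R_n, m) if and only if: (1) every H_i contains no cycle, and (2) the linear subspace K̃ := {(α, β) ∈ ℝ^m × ℝ^m : α = β, and for every i and every connected component C of H_i (including singleton components), Σ_{a : u_a ∈ C} α_a = Σ_{b : w_b ∈ C} β_b} has dimension exactly 1. (K̃ is the kernel of the matrix Q̃(H₁, …, Hₙ) of the paper, obtained from Q(H₁, …, Hₙ) by appending the m rows enforcing α_a = β_a; condition (2) is equivalent to rank Q̃(H₁, …, Hₙ) = 2m − 1.) -/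
/-- The polytope `Dist(R_n, m)` of distributions on the rose graph with `n`
loops and `m` outcomes: tuples of `m × m` matrices with nonnegative entries
summing to `1`, such that a single vector `μ` equals both the row-sum vector
and the column-sum vector of every matrix. -/
def RoseDist (n m : ℕ) : Set (Fin n → Matrix (Fin m) (Fin m) ℝ) :=
  {p | (∀ i a b, 0 ≤ p i a b) ∧ (∀ i, ∑ a, ∑ b, p i a b = 1) ∧
       ∃ μ : Fin m → ℝ, ∀ i,
         (∀ a, ∑ b, p i a b = μ a) ∧ (∀ b, ∑ a, p i a b = μ b)}

/-!
A point of a polytope `{x ≥ 0} ∩ (affine subspace)` is extreme iff no nonzero direction of the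
affine subspace is supported on its support. For `Dist(R_n, m)` such a direction is a family
`dᵢ`, supported on `supp pᵢ`, whose row and column sums all equal one vector `ν` with `∑ ν = 0`.

Two facts about a single matrix `q` with support graph `H` control these directions. By duality,
the margins of the matrices supported on `supp q` are exactly the pairs `(α, β)` whose sums agree
on every component of `H`. The margin map has trivial kernel on them iff `H` is a forest: the
edge `u_a w_b` carries a kernel element iff `u_a` and `w_b` remain connected once it is deleted.
Hence `p` is extreme iff every `Hᵢ` is a forest and `K̃` meets the hyperplane `∑ α = 0` only
in `0`; since `(μ, μ) ∈ K̃` with `∑ μ = 1`, the latter says that `K̃` is the line through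
`(μ, μ)`.
-/

open Filter Topology

lemma Submodule.eq_zero_of_mem_ker_iff_exists_coe_eq_range_smul {K V : Type*} [Field K]
    [AddCommGroup V] [Module K V] {W : Submodule K V} {σ : V →ₗ[K] K} {z₀ : V} (hz₀ : z₀ ∈ W)
    (hσ : σ z₀ ≠ 0) :
    (∀ x ∈ W, σ x = 0 → x = 0) ↔ ∃ z ≠ 0, (W : Set V) = Set.range fun c : K => c • z := by
  constructor
  · intro h
    refine ⟨z₀, fun h0 => hσ (by rw [h0, map_zero]), Set.ext fun x => ⟨fun hx => ?_, ?_⟩⟩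
    · refine ⟨σ x / σ z₀, (sub_eq_zero.1 (h _ (W.sub_mem hx (W.smul_mem _ hz₀)) ?_)).symm⟩
      rw [map_sub, map_smul, smul_eq_mul, div_mul_cancel₀ _ hσ, sub_self]
    · rintro ⟨c, rfl⟩
      exact W.smul_mem c hz₀
  · rintro ⟨z, -, hW⟩ x hx hσx
    obtain ⟨c₀, rfl⟩ : z₀ ∈ Set.range fun c : K => c • z := hW ▸ hz₀
    obtain ⟨c, rfl⟩ : x ∈ Set.range fun c : K => c • z := hW ▸ hx
    rw [map_smul, smul_eq_mul] at hσ hσx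
    simp [(mul_eq_zero.1 hσx).resolve_right (right_ne_zero_of_mul hσ)]

lemma Module.Dual.apply_prod_eq_sum {ι κ : Type*} [Fintype ι] [Fintype κ] [DecidableEq ι]
    [DecidableEq κ] (φ : Module.Dual ℝ ((ι → ℝ) × (κ → ℝ))) (x : (ι → ℝ) × (κ → ℝ)) :
    φ x = ∑ a, x.1 a * φ (Pi.single a 1, 0) + ∑ b, x.2 b * φ (0, Pi.single b 1) := by
  have hx : x = LinearMap.inl ℝ _ _ x.1 + LinearMap.inr ℝ _ _ x.2 := by simp
  conv_lhs => rw [hx, map_add, ← LinearMap.comp_apply, ← LinearMap.comp_apply,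
    LinearMap.pi_apply_eq_sum_univ, LinearMap.pi_apply_eq_sum_univ]
  have hι (i : ι) : (fun j => if i = j then (1 : ℝ) else 0) = Pi.single i 1 :=
    funext fun j => by simp [Pi.single_apply, eq_comm]
  have hκ (i : κ) : (fun j => if i = j then (1 : ℝ) else 0) = Pi.single i 1 :=
    funext fun j => by simp [Pi.single_apply, eq_comm]
  simp only [hι, hκ, smul_eq_mul, LinearMap.comp_apply, LinearMap.inl_apply,
    LinearMap.inr_apply]

lemma sum_ite_pi_single {τ : Type*} [Fintype τ] [DecidableEq τ] (P : τ → Prop) [DecidablePred P]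
    (t : τ) (c : ℝ) : (∑ s, if P s then Pi.single t c s else 0) = if P t then c else 0 := by
  rw [Fintype.sum_eq_single t fun s hs => by simp [Pi.single_eq_of_ne hs]]
  simp

lemma eventually_nonneg_add_mul {x y : ℝ} (hx : 0 ≤ x) (hy : x = 0 → y = 0) :
    ∀ᶠ t in 𝓝 0, 0 ≤ x + t * y := by
  rcases hx.eq_or_lt with rfl | hx
  · simp [hy rfl]
  · have : Tendsto (fun t => x + t * y) (𝓝 0) (𝓝 x) := by
      simpa using (tendsto_const_nhds (x := x)).add ((tendsto_id (x := 𝓝 (0 : ℝ))).mul_const y)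
    exact (this.eventually_const_lt hx).mono fun _ => le_of_lt

namespace RoseDist

section Margins

variable {ι κ : Type*}

def supported (q : Matrix ι κ ℝ) : Submodule ℝ (Matrix ι κ ℝ) where
  carrier := {d | ∀ a b, q a b = 0 → d a b = 0}
  add_mem' hd he a b h := by simp [hd a b h, he a b h]
  zero_mem' _ _ _ := rfl
  smul_mem' c d hd a b h := by simp [hd a b h]

section Single

variable [DecidableEq ι] [DecidableEq κ]

lemma single_mem_supported {q : Matrix ι κ ℝ} {a : ι} {b : κ} (hab : q a b ≠ 0) (c : ℝ) :
    Matrix.single a b c ∈ supported q := by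
  intro a' b' h
  rw [Matrix.single_apply, if_neg]
  rintro ⟨rfl, rfl⟩
  exact hab h

@[simp] lemma sub_single_apply_self (x : Matrix ι κ ℝ) (a : ι) (b : κ) :
    (x - Matrix.single a b (x a b)) a b = 0 := by
  simp

lemma sub_single_apply_of_ne (x : Matrix ι κ ℝ) {a a' : ι} {b b' : κ}
    (h : ¬(a = a' ∧ b = b')) : (x - Matrix.single a b (x a b)) a' b' = x a' b' := by
  rw [Matrix.sub_apply, Matrix.single_apply, if_neg h, sub_zero]

lemma supported_sub_single_le (q : Matrix ι κ ℝ) (a : ι) (b : κ) :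
    supported (q - Matrix.single a b (q a b)) ≤ supported q := by
  intro d hd a' b' h
  refine hd a' b' ?_
  by_cases hab : a = a' ∧ b = b'
  · obtain ⟨rfl, rfl⟩ := hab
    simp
  · rwa [sub_single_apply_of_ne q hab]

lemma sub_single_mem_supported {q d : Matrix ι κ ℝ} (hd : d ∈ supported q) (a : ι) (b : κ) :
    d - Matrix.single a b (d a b) ∈ supported (q - Matrix.single a b (q a b)) := by
  intro a' b' h
  by_cases hab : a = a' ∧ b = b'
  · obtain ⟨rfl, rfl⟩ := hab
    simp
  · rw [sub_single_apply_of_ne q hab] at h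
    rw [sub_single_apply_of_ne d hab, hd a' b' h]

end Single

variable [Fintype ι] [Fintype κ]

def margins : Matrix ι κ ℝ →ₗ[ℝ] (ι → ℝ) × (κ → ℝ) where
  toFun d := (fun a => ∑ b, d a b, fun b => ∑ a, d a b)
  map_add' d e := by ext <;> simp [Finset.sum_add_distrib]
  map_smul' c d := by ext <;> simp [Finset.mul_sum]

@[simp] lemma margins_apply (d : Matrix ι κ ℝ) :
    margins d = (fun a => ∑ b, d a b, fun b => ∑ a, d a b) := rfl

lemma sum_sum_eq_sum_margins_fst (d : Matrix ι κ ℝ) :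
    ∑ a, ∑ b, d a b = ∑ a, (margins d).1 a := rfl

lemma margins_single [DecidableEq ι] [DecidableEq κ] (a : ι) (b : κ) (c : ℝ) :
    margins (Matrix.single a b c) = (Pi.single a c, Pi.single b c) := by
  ext x <;> simp [Matrix.single_apply, Pi.single_apply, ite_and, eq_comm]

end Margins

section Balanced

variable {ι κ : Type*} [Fintype ι] [Fintype κ] {G : SimpleGraph (ι ⊕ κ)}
  [DecidableRel G.Reachable]

def IsBalanced (G : SimpleGraph (ι ⊕ κ)) [DecidableRel G.Reachable] (α : ι → ℝ) (β : κ → ℝ) :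
    Prop :=
  ∀ v, (∑ a, if G.Reachable v (.inl a) then α a else 0) =
    ∑ b, if G.Reachable v (.inr b) then β b else 0

open scoped Classical in
lemma sum_mul_eq_sum_connectedComponent {τ : Type*} [Fintype τ] {f : ι ⊕ κ → ℝ}
    (hf : ∀ v w, G.Reachable v w → f v = f w) (e : τ → ι ⊕ κ) (γ : τ → ℝ) :
    ∑ t, γ t * f (e t) =
      ∑ c : G.ConnectedComponent, f c.out * ∑ t, if G.Reachable c.out (e t) then γ t else 0 := by
  simp_rw [Finset.mul_sum]
  rw [Finset.sum_comm]
  refine Finset.sum_congr rfl fun t _ => ?_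
  have hc (c : G.ConnectedComponent) :
      G.Reachable c.out (e t) ↔ c = G.connectedComponentMk (e t) := by
    rw [← SimpleGraph.ConnectedComponent.eq]
    exact Iff.of_eq (congrArg (· = _) c.out_eq)
  calc γ t * f (e t)
      = ∑ c : G.ConnectedComponent,
          if c = G.connectedComponentMk (e t) then γ t * f (e t) else 0 := by simp
    _ = _ := Finset.sum_congr rfl fun c _ => by
        by_cases h : G.Reachable c.out (e t)
        · rw [if_pos h, if_pos ((hc c).1 h), hf _ _ h, mul_comm]
        · rw [if_neg h, if_neg (mt (hc c).2 h), mul_zero]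

lemma IsBalanced.sum_mul_eq {α : ι → ℝ} {β : κ → ℝ} (h : IsBalanced G α β) {f : ι ⊕ κ → ℝ}
    (hf : ∀ v w, G.Reachable v w → f v = f w) :
    ∑ a, α a * f (.inl a) = ∑ b, β b * f (.inr b) := by
  classical
  rw [sum_mul_eq_sum_connectedComponent hf, sum_mul_eq_sum_connectedComponent hf]
  exact Finset.sum_congr rfl fun c _ => by rw [h c.out]

lemma isBalanced_single_iff [DecidableEq ι] [DecidableEq κ] {a : ι} {b : κ} {c : ℝ}
    (hc : c ≠ 0) :
    IsBalanced G (Pi.single a c) (Pi.single b c) ↔ G.Reachable (.inl a) (.inr b) := by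
  simp only [IsBalanced, sum_ite_pi_single]
  constructor
  · intro h
    by_contra hab
    simpa [hab, hc] using h (.inl a)
  · intro hab v
    have hv : G.Reachable v (.inl a) ↔ G.Reachable v (.inr b) :=
      ⟨fun h => h.trans hab, fun h => h.trans hab.symm⟩
    exact if_congr hv rfl rfl

end Balanced

section SupportGraph

open scoped Classical

variable {m : ℕ} {q : Matrix (Fin m) (Fin m) ℝ} {a b : Fin m}

@[simp] lemma hmat_adj_inl_inr : (Hmat q).Adj (.inl a) (.inr b) ↔ q a b ≠ 0 := by
  simp [Hmat]

@[simp] lemma hmat_adj_inr_inl : (Hmat q).Adj (.inr b) (.inl a) ↔ q a b ≠ 0 := by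
  simp [Hmat]

@[simp] lemma not_hmat_adj_inl_inl {a' : Fin m} : ¬(Hmat q).Adj (.inl a) (.inl a') := by
  simp [Hmat]

@[simp] lemma not_hmat_adj_inr_inr {b' : Fin m} : ¬(Hmat q).Adj (.inr b) (.inr b') := by
  simp [Hmat]

lemma hmat_sub_single :
    Hmat (q - Matrix.single a b (q a b)) = (Hmat q).deleteEdges {s(.inl a, .inr b)} := by
  ext v w
  rcases v with a' | b' <;> rcases w with a'' | b'' <;> simp [Matrix.single_apply]
  all_goals split_ifs with h <;> grind

lemma eq_of_hmat_reachable {f : Fin m ⊕ Fin m → ℝ}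
    (hf : ∀ a b, q a b ≠ 0 → f (.inl a) = f (.inr b)) {v w : Fin m ⊕ Fin m}
    (h : (Hmat q).Reachable v w) : f v = f w := by
  obtain ⟨walk⟩ := h
  induction walk with
  | nil => rfl
  | @cons u u' _ hadj _ ih =>
    refine Eq.trans ?_ ih
    rcases u with a | b <;> rcases u' with a' | b' <;> simp at hadj
    · exact hf a b' hadj
    · exact (hf a' b hadj).symm

lemma isBalanced_margins {d : Matrix (Fin m) (Fin m) ℝ} (hd : d ∈ supported q) :
    IsBalanced (Hmat q) (margins d).1 (margins d).2 := by
  intro v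
  have hsum (P : Prop) [Decidable P] (x : Fin m → ℝ) :
      (if P then ∑ c, x c else 0) = ∑ c, if P then x c else 0 := by
    split_ifs <;> simp
  simp only [margins_apply, hsum]
  rw [Finset.sum_comm]
  refine Finset.sum_congr rfl fun b _ => Finset.sum_congr rfl fun a _ => ?_
  by_cases hab : q a b = 0
  · simp [hd a b hab]
  · have hadj := hmat_adj_inl_inr.2 hab
    have hv : (Hmat q).Reachable v (.inl a) ↔ (Hmat q).Reachable v (.inr b) :=
      ⟨fun h => h.trans hadj.reachable, fun h => h.trans hadj.symm.reachable⟩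
    exact if_congr hv rfl rfl

lemma mem_map_margins_of_isBalanced {α β : Fin m → ℝ} (h : IsBalanced (Hmat q) α β) :
    (α, β) ∈ (supported q).map margins := by
  rw [← Subspace.forall_mem_dualAnnihilator_apply_eq_zero_iff]
  intro φ hφ
  -- `φ` kills the margins `(e_a, e_b)` of every edge, so `φ (e_a, 0)` and `-φ (0, e_b)` are the
  -- values at the endpoints of a function that is constant on components.
  have hedge : ∀ a b, q a b ≠ 0 → φ (Pi.single a 1, 0) = -φ (0, Pi.single b 1) := by
    intro a b hab
    have := (Submodule.mem_dualAnnihilator φ).1 hφ _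
      (Submodule.mem_map_of_mem (single_mem_supported hab 1))
    have e : ((Pi.single a 1, Pi.single b 1) : (Fin m → ℝ) × (Fin m → ℝ)) =
        (Pi.single a 1, 0) + (0, Pi.single b 1) := by simp
    rw [margins_single, e, map_add] at this
    exact eq_neg_of_add_eq_zero_left this
  have key := h.sum_mul_eq (fun _ _ => eq_of_hmat_reachable
    (f := Sum.elim (fun a => φ (Pi.single a 1, 0)) (fun b => -φ (0, Pi.single b 1))) hedge)
  simp only [Sum.elim_inl, Sum.elim_inr, mul_neg, Finset.sum_neg_distrib] at key
  rw [Module.Dual.apply_prod_eq_sum]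
  exact add_eq_zero_iff_eq_neg.2 key

theorem isBalanced_iff_mem_map_margins {α β : Fin m → ℝ} :
    IsBalanced (Hmat q) α β ↔ (α, β) ∈ (supported q).map margins := by
  refine ⟨mem_map_margins_of_isBalanced, ?_⟩
  rintro ⟨d, hd, hdm⟩
  simpa [hdm] using isBalanced_margins hd

lemma exists_margins_eq_zero_apply_ne_zero_iff (hab : q a b ≠ 0) :
    (∃ d ∈ supported q, margins d = 0 ∧ d a b ≠ 0) ↔
      (Hmat (q - Matrix.single a b (q a b))).Reachable (.inl a) (.inr b) := by
  constructor
  · rintro ⟨d, hd, hd0, hdab⟩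
    have h := isBalanced_margins (sub_single_mem_supported hd a b)
    rw [map_sub, hd0, margins_single, zero_sub, Prod.fst_neg, Prod.snd_neg, ← Pi.single_neg,
      ← Pi.single_neg] at h
    exact (isBalanced_single_iff (neg_ne_zero.2 hdab)).1 h
  · intro hreach
    obtain ⟨d, hd, hdm⟩ := isBalanced_iff_mem_map_margins.1
      ((isBalanced_single_iff (neg_ne_zero.2 one_ne_zero)).2 hreach)
    refine ⟨d + Matrix.single a b 1, add_mem (supported_sub_single_le q a b hd)
      (single_mem_supported hab 1), ?_, ?_⟩
    · rw [map_add, hdm, margins_single, Prod.mk_add_mk, ← Pi.single_add, ← Pi.single_add,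
        neg_add_cancel, Pi.single_zero, Pi.single_zero, Prod.mk_zero_zero]
    · have hdab : d a b = 0 := hd a b (sub_single_apply_self q a b)
      simp [hdab]

theorem isAcyclic_hmat_iff :
    (Hmat q).IsAcyclic ↔ ∀ d ∈ supported q, margins d = 0 → d = 0 := by
  have hbridge {a b : Fin m} (hab : q a b ≠ 0) : (Hmat q).IsBridge s(.inl a, .inr b) ↔
      ∀ d ∈ supported q, margins d = 0 → d a b = 0 := by
    rw [SimpleGraph.isBridge_iff, ← hmat_sub_single,
      ← exists_margins_eq_zero_apply_ne_zero_iff hab]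
    simp only [not_exists, not_and, not_not]
  rw [SimpleGraph.isAcyclic_iff_forall_adj_isBridge]
  constructor
  · intro h d hd hd0
    ext a b
    by_cases hab : q a b = 0
    · exact hd a b hab
    · exact (hbridge hab).1 (h (hmat_adj_inl_inr.2 hab)) d hd hd0
  · intro h v w hvw
    rcases v with a | b <;> rcases w with a' | b' <;> simp at hvw
    · exact (hbridge hvw).2 fun d hd hd0 => by rw [h d hd hd0, Matrix.zero_apply]
    · rw [Sym2.eq_swap]
      exact (hbridge hvw).2 fun d hd hd0 => by rw [h d hd hd0, Matrix.zero_apply]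

end SupportGraph

variable {n m : ℕ} {p : Fin n → Matrix (Fin m) (Fin m) ℝ}

lemma mem_roseDist_iff : p ∈ RoseDist n m ↔ (∀ i a b, 0 ≤ p i a b) ∧
    (∀ i, ∑ a, ∑ b, p i a b = 1) ∧ ∃ μ, ∀ i, margins (p i) = (μ, μ) := by
  simp [RoseDist, Prod.ext_iff, funext_iff]

def IsFeasibleDir (p d : Fin n → Matrix (Fin m) (Fin m) ℝ) : Prop :=
  (∀ i, d i ∈ supported (p i)) ∧ (∀ i, ∑ a, ∑ b, d i a b = 0) ∧
    ∃ ν, ∀ i, margins (d i) = (ν, ν)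

lemma add_smul_mem_roseDist {d : Fin n → Matrix (Fin m) (Fin m) ℝ} {t : ℝ}
    (hp : p ∈ RoseDist n m) (hd : IsFeasibleDir p d)
    (ht : ∀ i a b, 0 ≤ p i a b + t * d i a b) : p + t • d ∈ RoseDist n m := by
  obtain ⟨-, hsum, μ, hμ⟩ := mem_roseDist_iff.1 hp
  obtain ⟨-, hdsum, ν, hν⟩ := hd
  refine mem_roseDist_iff.2 ⟨by simpa using ht, fun i => ?_, μ + t • ν, fun i => ?_⟩
  · simp [Finset.sum_add_distrib, ← Finset.mul_sum, hsum i, hdsum i]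
  · simp only [Pi.add_apply, Pi.smul_apply, map_add, map_smul, hμ i, hν i]
    rfl

lemma sub_isFeasibleDir {x : Fin n → Matrix (Fin m) (Fin m) ℝ} (hp : p ∈ RoseDist n m)
    (hx : x ∈ RoseDist n m) (hsupp : ∀ i a b, p i a b = 0 → x i a b = 0) :
    IsFeasibleDir p (x - p) := by
  obtain ⟨-, hsum, μ, hμ⟩ := mem_roseDist_iff.1 hp
  obtain ⟨-, hxsum, μ', hμ'⟩ := mem_roseDist_iff.1 hx
  refine ⟨fun i a b h => ?_, fun i => ?_, μ' - μ, fun i => ?_⟩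
  · simp [hsupp i a b h, h]
  · simp [Finset.sum_sub_distrib, hsum i, hxsum i]
  · rw [Pi.sub_apply, map_sub, hμ i, hμ' i]
    rfl

theorem mem_extremePoints_iff (hp : p ∈ RoseDist n m) :
    p ∈ Set.extremePoints ℝ (RoseDist n m) ↔ ∀ d, IsFeasibleDir p d → d = 0 := by
  constructor
  · intro hext d hd
    have hnonneg : ∀ᶠ t in 𝓝 (0 : ℝ), ∀ i a b, 0 ≤ p i a b + t * d i a b := by
      simp only [eventually_all]
      exact fun i a b => eventually_nonneg_add_mul ((mem_roseDist_iff.1 hp).1 i a b) (hd.1 i a b)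
    have hneg := (continuous_neg.tendsto' (0 : ℝ) 0 neg_zero).eventually hnonneg
    obtain ⟨t, ⟨hpos, hneg⟩, ht⟩ := ((hnonneg.and hneg).filter_mono nhdsWithin_le_nhds).and
      (self_mem_nhdsWithin (s := {0}ᶜ)) |>.exists
    have hseg : p ∈ openSegment ℝ (p + t • d) (p + (-t) • d) :=
      ⟨1 / 2, 1 / 2, by norm_num, by norm_num, by norm_num, by module⟩
    have htd := hext.2 (add_smul_mem_roseDist hp hd hpos) (add_smul_mem_roseDist hp hd hneg) hseg
    rw [add_eq_left, smul_eq_zero] at htd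
    exact htd.resolve_left ht
  · refine fun h => ⟨hp, fun x₁ hx₁ x₂ hx₂ ⟨s, t, hs, ht, _, hp₁₂⟩ => sub_eq_zero.1 (h _ ?_)⟩
    refine sub_isFeasibleDir hp hx₁ fun i a b h0 => ?_
    have h₁ := (mem_roseDist_iff.1 hx₁).1 i a b
    have h₂ := (mem_roseDist_iff.1 hx₂).1 i a b
    have := congr_fun (congr_fun (congr_fun hp₁₂ i) a) b
    simp only [Pi.add_apply, Pi.smul_apply, Matrix.add_apply, Matrix.smul_apply, smul_eq_mul,
      h0] at this
    nlinarith [mul_nonneg hs.le h₁, mul_nonneg ht.le h₂]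

/-- The paper's `K̃ = ker Q̃(H₁, …, Hₙ)`, by `isBalanced_iff_mem_map_margins`. -/
def kerQTilde (p : Fin n → Matrix (Fin m) (Fin m) ℝ) :
    Submodule ℝ ((Fin m → ℝ) × (Fin m → ℝ)) :=
  LinearMap.ker (LinearMap.fst ℝ _ _ - LinearMap.snd ℝ _ _) ⊓ ⨅ i, (supported (p i)).map margins

lemma mem_kerQTilde {x : (Fin m → ℝ) × (Fin m → ℝ)} :
    x ∈ kerQTilde p ↔ x.1 = x.2 ∧ ∀ i, x ∈ (supported (p i)).map margins := by
  simp [kerQTilde, sub_eq_zero]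

theorem forall_isFeasibleDir_eq_zero_iff [Nonempty (Fin n)] :
    (∀ d, IsFeasibleDir p d → d = 0) ↔
      (∀ i, (Hmat (p i)).IsAcyclic) ∧ ∀ x ∈ kerQTilde p, ∑ a, x.1 a = 0 → x = 0 := by
  let i₀ : Fin n := Classical.arbitrary _
  constructor
  · intro h
    refine ⟨fun i => isAcyclic_hmat_iff.2 fun e he he0 => ?_, fun x hx hx0 => ?_⟩
    · let d : Fin n → Matrix (Fin m) (Fin m) ℝ := Pi.single i e
      have hm (j : Fin n) : margins (d j) = 0 := by
        rcases eq_or_ne j i with rfl | hj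
        · simpa [d] using he0
        · rw [show d j = 0 from Pi.single_eq_of_ne (M := fun _ => Matrix (Fin m) (Fin m) ℝ) hj e,
            map_zero]
      have hsupp (j : Fin n) : d j ∈ supported (p j) := by
        rcases eq_or_ne j i with rfl | hj
        · simpa [d] using he
        · simp [d, hj]
      have := h d ⟨hsupp, fun j => by rw [sum_sum_eq_sum_margins_fst, hm j]; simp, 0, hm⟩
      simpa [d] using congr_fun this i
    · obtain ⟨hx12, hxi⟩ := mem_kerQTilde.1 hx
      choose d hd hdm using hxi
      have h0 := h d ⟨hd, fun i => by rw [sum_sum_eq_sum_margins_fst, hdm i, hx0],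
        x.1, fun i => by rw [hdm i]; exact Prod.ext rfl hx12.symm⟩
      rw [← hdm i₀, h0, Pi.zero_apply, map_zero]
  · rintro ⟨hacyc, hK⟩ d ⟨hsupp, hsum, ν, hν⟩
    have hν0 : ν = 0 := congr_arg Prod.fst <| hK (ν, ν)
      (mem_kerQTilde.2 ⟨rfl, fun i => ⟨d i, hsupp i, hν i⟩⟩)
      (by rw [← hsum i₀, sum_sum_eq_sum_margins_fst, hν i₀])
    funext i
    exact isAcyclic_hmat_iff.1 (hacyc i) (d i) (hsupp i) (by rw [hν i, hν0, Prod.mk_zero_zero])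

end RoseDist

open scoped Classical in
theorem stmt_18_general {n m : ℕ} (hn : 1 ≤ n)
    (p : Fin n → Matrix (Fin m) (Fin m) ℝ) (hp : p ∈ RoseDist n m) :
    p ∈ Set.extremePoints ℝ (RoseDist n m) ↔
      (∀ i, (Hmat (p i)).IsAcyclic) ∧
      ∃ z : (Fin m → ℝ) × (Fin m → ℝ), z ≠ 0 ∧
        {q : (Fin m → ℝ) × (Fin m → ℝ) | q.1 = q.2 ∧
          ∀ (i : Fin n) (v : Fin m ⊕ Fin m),
            (∑ a : Fin m, if (Hmat (p i)).Reachable v (Sum.inl a) then q.1 a else 0) =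
            (∑ b : Fin m, if (Hmat (p i)).Reachable v (Sum.inr b) then q.2 b else 0)} =
        Set.range (fun c : ℝ => c • z) := by
  have : Nonempty (Fin n) := ⟨⟨0, hn⟩⟩
  obtain ⟨-, hsum, μ, hμ⟩ := RoseDist.mem_roseDist_iff.1 hp
  have hK : {q : (Fin m → ℝ) × (Fin m → ℝ) |
      q.1 = q.2 ∧ ∀ i, RoseDist.IsBalanced (Hmat (p i)) q.1 q.2} = RoseDist.kerQTilde p := by
    ext x
    simp only [Set.mem_ofPred_eq, SetLike.mem_coe, RoseDist.mem_kerQTilde,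
      RoseDist.isBalanced_iff_mem_map_margins]
  let σ : (Fin m → ℝ) × (Fin m → ℝ) →ₗ[ℝ] ℝ :=
    (Fintype.linearCombination ℝ fun _ => (1 : ℝ)) ∘ₗ LinearMap.fst ℝ _ _
  have hσ (x : (Fin m → ℝ) × (Fin m → ℝ)) : σ x = ∑ a, x.1 a := by
    simp [σ, Fintype.linearCombination_apply]
  have hμK : (μ, μ) ∈ RoseDist.kerQTilde p :=
    RoseDist.mem_kerQTilde.2 ⟨rfl, fun i => ⟨p i, fun _ _ h => h, hμ i⟩⟩
  have hσμ : σ (μ, μ) = 1 := by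
    rw [hσ, ← hsum (Classical.arbitrary _), RoseDist.sum_sum_eq_sum_margins_fst, hμ]
  rw [RoseDist.mem_extremePoints_iff hp, RoseDist.forall_isFeasibleDir_eq_zero_iff]
  simp_rw [← hσ]
  rw [Submodule.eq_zero_of_mem_ker_iff_exists_coe_eq_range_smul hμK (hσμ ▸ one_ne_zero), ← hK]
  exact Iff.rfl

open scoped Classical in
/-- Graph-theoretic characterization of the vertices of the rose polytope:
`p` is extreme iff every support graph `H_i` is acyclic and the subspace `K̃`
of pairs `(α, β)` with `α = β` whose sums match on every connected component
of every `H_i` is one-dimensional (i.e. it is the set of multiples of a single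
nonzero vector; equivalently `rank Q̃(H₁, …, Hₙ) = 2m - 1`). -/
theorem stmt_18 {n m : ℕ} (hn : 1 ≤ n) (hm : 2 ≤ m)
    (p : Fin n → Matrix (Fin m) (Fin m) ℝ) (hp : p ∈ RoseDist n m) :
    p ∈ Set.extremePoints ℝ (RoseDist n m) ↔
      (∀ i, (Hmat (p i)).IsAcyclic) ∧
      ∃ z : (Fin m → ℝ) × (Fin m → ℝ), z ≠ 0 ∧
        {q : (Fin m → ℝ) × (Fin m → ℝ) | q.1 = q.2 ∧
          ∀ (i : Fin n) (v : Fin m ⊕ Fin m),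
            (∑ a : Fin m, if (Hmat (p i)).Reachable v (Sum.inl a) then q.1 a else 0) =
            (∑ b : Fin m, if (Hmat (p i)).Reachable v (Sum.inr b) then q.2 b else 0)} =
        Set.range (fun c : ℝ => c • z) :=
  stmt_18_general hn p hp
end

section
/- Let n₁, n₂ ≥ 1 and m ≥ 2. Identify each tuple v ∈ (ℤ_m)^{n₁} with the product-simplex vertex vec(v) := (e_{v(1)}, …, e_{v(n₁)}) ∈ (ℝ^m)^{n₁} ≅ ℝ^{n₁m}. Suppose A₁, …, A_{n₂} ⊆ (ℤ_m)^{n₁} are nonempty sets such that: |A_j| ≤ m for every j; each set {vec(v) : v ∈ A_j} is affinely independent; the intersection ⋂_{j=1}^{n₂} Conv({vec(v) : v ∈ A_j}) consists of exactly one point u; and for each j there is an injective map f_j : A_j → ℤ_m. For each j let (α_v)_{v ∈ A_j} be nonnegative reals summing to 1 with u = Σ_{v ∈ A_j} α_v · vec(v), and define the family of m×m matrices p_{k,j} (for 1 ≤ k ≤ n₁, 1 ≤ j ≤ n₂) by (p_{k,j})_{ab} := Σ{α_v : v ∈ A_j, v(k) = a, f_j(v) = b}. Then p = (p_{k,j})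 belongs to Dist(K_{n₁,n₂}, m) and is an extreme point of it. -/
/-- The polytope `Dist(K_{n₁,n₂}, m)` of distributions on the complete
bipartite graph `K_{n₁,n₂}` with `m` outcomes: families `p k j` of `m × m`
matrices with nonnegative entries summing to `1`, whose row-sum vector depends
only on `k` and whose column-sum vector depends only on `j`. -/
def KDist (n₁ n₂ m : ℕ) : Set (Fin n₁ → Fin n₂ → Matrix (Fin m) (Fin m) ℝ) :=
  {p | (∀ k j a b, 0 ≤ p k j a b) ∧ (∀ k j, ∑ a, ∑ b, p k j a b = 1) ∧
       (∀ k j j' a, ∑ b, p k j a b = ∑ b, p k j' a b) ∧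
       (∀ k k' j b, ∑ a, p k j a b = ∑ a, p k' j a b)}

/-- The product-simplex vertex in `ℝ^{n₁ m} ≅ (ℝ^m)^{n₁}` associated to a tuple
`v ∈ (ℤ_m)^{n₁}`: its `k`-th block is the standard basis vector `e_{v k}`. -/
def vec {n₁ m : ℕ} (v : Fin n₁ → Fin m) : Fin n₁ → Fin m → ℝ :=
  fun k => Pi.single (v k) 1

/-!
Write `p k j` as the matrix of fiber sums of the weights `α j` under `v ↦ (v k, f j v)`.
Since `p ≥ 0`, it is extreme as soon as every `q ∈ Dist` with `t • q ≤ p` for some `t > 0` equals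
`p`. Such a `q` vanishes off the pattern `{(v k, f j v) | v ∈ A j}`; as `f j` is injective, each
column `f j v` has a single nonzero entry, so `q k j` is the fiber-sum matrix of its column sums
`β j v`, which do not depend on `k`. The row sums of `q` are then the coordinates of
`∑ v, β j v • vec v`; they do not depend on `j`, so this point lies in every
`convexHull (vec '' A j)` and is `u`. Affine independence of `vec '' A j` forces `β j = α j`.
-/

theorem mem_extremePoints_of_forall_smul_le {𝕜 E : Type*} [Semiring 𝕜] [PartialOrder 𝕜]
    [AddCommMonoid E] [PartialOrder E] [IsOrderedAddMonoid E] [Module 𝕜 E] [PosSMulMono 𝕜 E]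
    {S : Set E} {p : E} (hS : ∀ x ∈ S, 0 ≤ x) (hp : p ∈ S)
    (h : ∀ q ∈ S, ∀ t : 𝕜, 0 < t → t • q ≤ p → q = p) :
    p ∈ S.extremePoints 𝕜 := by
  refine mem_extremePoints_iff_left.2 ⟨hp, fun x₁ hx₁ x₂ hx₂ ⟨a, b, ha, hb, _, hab⟩ => ?_⟩
  refine h x₁ hx₁ a ha ?_
  rw [← hab]
  exact le_add_of_nonneg_right (smul_nonneg hb.le (hS x₂ hx₂))

theorem AffineIndependent.eqOn_of_sum_smul_eq {k ι E : Type*} [Ring k] [AddCommGroup E]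
    [Module k E] {s : Finset ι} {φ : ι → E} (hφ : Set.InjOn φ s)
    (hind : AffineIndependent k ((↑) : φ '' s → E)) {α β : ι → k}
    (hα : ∑ i ∈ s, α i = 1) (hβ : ∑ i ∈ s, β i = 1)
    (h : ∑ i ∈ s, α i • φ i = ∑ i ∈ s, β i • φ i) : Set.EqOn α β s := by
  let e : s ↪ φ '' s := ⟨fun i => ⟨φ i, i, i.2, rfl⟩, fun i i' hii' =>
    Subtype.ext (hφ i.2 i'.2 (congrArg Subtype.val hii'))⟩
  have hind' : AffineIndependent k (fun i : s => φ i) := hind.comp_embedding e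
  have hα' : ∑ i : s, α i = 1 := by rwa [Finset.sum_coe_sort s α]
  have hβ' : ∑ i : s, β i = 1 := by rwa [Finset.sum_coe_sort s β]
  have hcomb : Finset.univ.affineCombination k (fun i : s => φ i) (fun i => α i) =
      Finset.univ.affineCombination k (fun i : s => φ i) (fun i => β i) := by
    rw [Finset.affineCombination_eq_linear_combination _ _ _ hα',
      Finset.affineCombination_eq_linear_combination _ _ _ hβ',
      Finset.sum_coe_sort s (fun i => α i • φ i), Finset.sum_coe_sort s (fun i => β i • φ i), h]
  intro i hi
  exact congrFun ((affineIndependent_iff_eq_of_fintype_affineCombination_eq k _).1 hind' _ _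
    hα' hβ' hcomb) ⟨i, hi⟩

theorem vec_injective {n m : ℕ} :
    Function.Injective (vec : (Fin n → Fin m) → Fin n → Fin m → ℝ) := by
  intro v w h
  funext k
  by_contra hk
  simpa [vec, hk] using congrFun (congrFun h k) (v k)

theorem sum_smul_vec_apply {n m : ℕ} (s : Finset (Fin n → Fin m)) (β : (Fin n → Fin m) → ℝ)
    (k : Fin n) (a : Fin m) :
    (∑ v ∈ s, β v • vec v) k a = ∑ v ∈ s with v k = a, β v := by
  simp [Finset.sum_apply, vec, Pi.single_apply, Finset.sum_filter, eq_comm]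

section FiberMatrix

variable {ι R C : Type*} [DecidableEq R] [DecidableEq C]
  (s : Finset ι) (r : ι → R) (g : ι → C) (β : ι → ℝ)

def fiberMatrix : Matrix R C ℝ :=
  Matrix.of fun a b => ∑ i ∈ s with r i = a ∧ g i = b, β i

theorem fiberMatrix_apply (a : R) (b : C) :
    fiberMatrix s r g β a b = ∑ i ∈ s with r i = a ∧ g i = b, β i := rfl

theorem fiberMatrix_nonneg {β : ι → ℝ} (hβ : ∀ i ∈ s, 0 ≤ β i) (a : R) (b : C) :
    0 ≤ fiberMatrix s r g β a b :=
  Finset.sum_nonneg fun i hi => hβ i (Finset.mem_filter.1 hi).1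

theorem fiberMatrix_apply_eq_zero {a : R} {b : C} (h : ∀ i ∈ s, ¬(r i = a ∧ g i = b)) :
    fiberMatrix s r g β a b = 0 :=
  Finset.sum_eq_zero fun i hi =>
    absurd (Finset.mem_filter.1 hi).2 (h i (Finset.mem_filter.1 hi).1)

theorem sum_fiberMatrix_row [Fintype C] (a : R) :
    ∑ b, fiberMatrix s r g β a b = ∑ i ∈ s with r i = a, β i := by
  simp_rw [fiberMatrix_apply, ← Finset.filter_filter]
  exact Finset.sum_fiberwise _ _ _

theorem sum_fiberMatrix_col [Fintype R] (b : C) :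
    ∑ a, fiberMatrix s r g β a b = ∑ i ∈ s with g i = b, β i := by
  simp_rw [fiberMatrix_apply, and_comm (a := r _ = _), ← Finset.filter_filter]
  exact Finset.sum_fiberwise _ _ _

theorem sum_sum_fiberMatrix [Fintype R] [Fintype C] :
    ∑ a, ∑ b, fiberMatrix s r g β a b = ∑ i ∈ s, β i := by
  simp_rw [sum_fiberMatrix_row]
  exact Finset.sum_fiberwise _ _ _

theorem fiberMatrix_congr {β β' : ι → ℝ} (h : Set.EqOn β β' s) :
    fiberMatrix s r g β = fiberMatrix s r g β' := by
  ext a b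
  exact Finset.sum_congr rfl fun i hi => h (Finset.mem_filter.1 hi).1

variable {s g}

theorem fiberMatrix_apply_of_injOn (hg : Set.InjOn g s) {i : ι} (hi : i ∈ s) (a : R) :
    fiberMatrix s r g β a (g i) = if r i = a then β i else 0 := by
  rw [fiberMatrix_apply, Finset.sum_filter, Finset.sum_eq_single_of_mem i hi]
  · simp only [and_true]
  · exact fun i' hi' hne => if_neg fun h => hne (hg hi' hi h.2)

theorem eq_fiberMatrix_of_support [Fintype R] (hg : Set.InjOn g s) {Q : Matrix R C ℝ}
    (hQ : ∀ a b, (∀ i ∈ s, ¬(r i = a ∧ g i = b)) → Q a b = 0) :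
    Q = fiberMatrix s r g (fun i => ∑ a, Q a (g i)) := by
  ext a b
  by_cases hb : ∃ i ∈ s, g i = b
  · obtain ⟨i, hi, rfl⟩ := hb
    have hcol : ∀ a, r i ≠ a → Q a (g i) = 0 := fun a ha =>
      hQ a (g i) fun i' hi' h' => ha (hg hi' hi h'.2 ▸ h'.1)
    rw [fiberMatrix_apply_of_injOn r _ hg hi]
    split_ifs with hia
    · exact (Finset.sum_eq_single_of_mem a (Finset.mem_univ a) fun a' _ ha' =>
        hcol a' (hia ▸ ha'.symm)).symm
    · exact hcol a hia
  · push Not at hb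
    have hempty : ∀ i ∈ s, ¬(r i = a ∧ g i = b) := fun i hi h => hb i hi h.2
    rw [hQ a b hempty, fiberMatrix_apply_eq_zero _ _ _ _ hempty]

end FiberMatrix

section VertexDist

variable {n₁ n₂ m : ℕ} (s : Fin n₂ → Finset (Fin n₁ → Fin m))
  (f : Fin n₂ → (Fin n₁ → Fin m) → Fin m) (α : Fin n₂ → (Fin n₁ → Fin m) → ℝ)

def vertexDist : Fin n₁ → Fin n₂ → Matrix (Fin m) (Fin m) ℝ :=
  fun k j => fiberMatrix (s j) (· k) (f j) (α j)

theorem sum_vertexDist_row (k : Fin n₁) (j : Fin n₂) (a : Fin m) :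
    ∑ b, vertexDist s f α k j a b = (∑ v ∈ s j, α j v • vec v) k a := by
  rw [sum_smul_vec_apply]
  exact sum_fiberMatrix_row _ _ _ _ a

variable {s α}

theorem vertexDist_mem_KDist {u : Fin n₁ → Fin m → ℝ} (hα0 : ∀ j, ∀ v ∈ s j, 0 ≤ α j v)
    (hα1 : ∀ j, ∑ v ∈ s j, α j v = 1) (hαu : ∀ j, ∑ v ∈ s j, α j v • vec v = u) :
    vertexDist s f α ∈ KDist n₁ n₂ m := by
  refine ⟨fun k j => fiberMatrix_nonneg _ _ _ (hα0 j), fun k j => ?_, fun k j j' a => ?_,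
    fun k k' j b => ?_⟩
  · rw [vertexDist, sum_sum_fiberMatrix, hα1]
  · rw [sum_vertexDist_row, sum_vertexDist_row, hαu, hαu]
  · rw [vertexDist, vertexDist, sum_fiberMatrix_col, sum_fiberMatrix_col]

theorem eq_vertexDist_of_support {u : Fin n₁ → Fin m → ℝ} (hf : ∀ j, Set.InjOn (f j) (s j))
    (haff : ∀ j, AffineIndependent ℝ
      ((↑) : vec '' (s j : Set (Fin n₁ → Fin m)) → (Fin n₁ → Fin m → ℝ)))
    (hu : (⋂ j, convexHull ℝ (vec '' (s j : Set (Fin n₁ → Fin m)))) ⊆ {u})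
    (hα1 : ∀ j, ∑ v ∈ s j, α j v = 1) (hαu : ∀ j, ∑ v ∈ s j, α j v • vec v = u)
    {q : Fin n₁ → Fin n₂ → Matrix (Fin m) (Fin m) ℝ} (hq : q ∈ KDist n₁ n₂ m)
    (hsupp : ∀ k j a b, (∀ v ∈ s j, ¬(v k = a ∧ f j v = b)) → q k j a b = 0) :
    q = vertexDist s f α := by
  obtain ⟨hq0, hq1, hqrow, hqcol⟩ := hq
  funext k
  set β : Fin n₂ → (Fin n₁ → Fin m) → ℝ := fun j v => ∑ a, q k j a (f j v)
  have hqβ : q = vertexDist s f β := by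
    funext k' j
    rw [eq_fiberMatrix_of_support _ (hf j) (hsupp k' j)]
    simp_rw [hqcol k' k j]
    rfl
  have hβ0 : ∀ j, ∀ v ∈ s j, 0 ≤ β j v := fun j v _ => Finset.sum_nonneg fun a _ => hq0 k j a _
  have hβ1 : ∀ j, ∑ v ∈ s j, β j v = 1 := fun j => by
    rw [← sum_sum_fiberMatrix (s j) (· k) (f j), ← hq1 k j, hqβ]
    rfl
  have hβu : ∀ j, ∑ v ∈ s j, β j v • vec v = u := by
    have hrow : ∀ j j', ∑ v ∈ s j, β j v • vec v = ∑ v ∈ s j', β j' v • vec v := fun j j' => by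
      funext k' a
      rw [← sum_vertexDist_row, ← sum_vertexDist_row, ← hqβ, hqrow]
    refine fun j => hu (Set.mem_iInter.2 fun j' => ?_)
    rw [hrow j j']
    exact (convex_convexHull ℝ _).sum_mem (hβ0 j') (hβ1 j') fun v hv =>
      subset_convexHull ℝ _ ⟨v, hv, rfl⟩
  funext j
  rw [hqβ]
  exact fiberMatrix_congr _ _ _ <|
    (AffineIndependent.eqOn_of_sum_smul_eq vec_injective.injOn (haff j) (hβ1 j) (hα1 j)
      ((hβu j).trans (hαu j).symm))

theorem vertexDist_mem_extremePoints {u : Fin n₁ → Fin m → ℝ} (hf : ∀ j, Set.InjOn (f j) (s j))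
    (haff : ∀ j, AffineIndependent ℝ
      ((↑) : vec '' (s j : Set (Fin n₁ → Fin m)) → (Fin n₁ → Fin m → ℝ)))
    (hu : (⋂ j, convexHull ℝ (vec '' (s j : Set (Fin n₁ → Fin m)))) ⊆ {u})
    (hα0 : ∀ j, ∀ v ∈ s j, 0 ≤ α j v) (hα1 : ∀ j, ∑ v ∈ s j, α j v = 1)
    (hαu : ∀ j, ∑ v ∈ s j, α j v • vec v = u) :
    vertexDist s f α ∈ Set.extremePoints ℝ (KDist n₁ n₂ m) := by
  -- `Matrix` has no global order instance, so `KDist` is viewed in the pointwise-ordered space.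
  refine mem_extremePoints_of_forall_smul_le (E := Fin n₁ → Fin n₂ → Fin m → Fin m → ℝ)
    (fun q hq k j a b => hq.1 k j a b) (vertexDist_mem_KDist f hα0 hα1 hαu)
    fun q hq t ht hle => ?_
  refine eq_vertexDist_of_support f hf haff hu hα1 hαu hq fun k j a b hab => ?_
  have hle' : t * q k j a b ≤ 0 := by
    simpa [vertexDist, fiberMatrix_apply_eq_zero _ _ _ _ hab] using hle k j a b
  exact le_antisymm (nonpos_of_mul_nonpos_right hle' ht) (hq.1 k j a b)

end VertexDist

open scoped Classical in
theorem stmt_19_general {n₁ n₂ m : ℕ}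
    (A : Fin n₂ → Set (Fin n₁ → Fin m))
    (haff : ∀ j, AffineIndependent ℝ ((↑) : (vec '' A j) → (Fin n₁ → Fin m → ℝ)))
    (u : Fin n₁ → Fin m → ℝ)
    (hu : (⋂ j, convexHull ℝ (vec '' A j)) = {u})
    (f : Fin n₂ → (Fin n₁ → Fin m) → Fin m)
    (hf : ∀ j, Set.InjOn (f j) (A j))
    (α : Fin n₂ → (Fin n₁ → Fin m) → ℝ)
    (hα0 : ∀ j, ∀ v ∈ A j, 0 ≤ α j v)
    (hα1 : ∀ j, ∑ v ∈ (A j).toFinset, α j v = 1)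
    (hαu : ∀ j, ∑ v ∈ (A j).toFinset, α j v • vec v = u)
    (p : Fin n₁ → Fin n₂ → Matrix (Fin m) (Fin m) ℝ)
    (hpdef : ∀ k j a b, p k j a b =
      ∑ v ∈ (A j).toFinset.filter (fun v => v k = a ∧ f j v = b), α j v) :
    p ∈ KDist n₁ n₂ m ∧ p ∈ Set.extremePoints ℝ (KDist n₁ n₂ m) := by
  have hp : p = vertexDist (fun j => (A j).toFinset) f α := by
    funext k j
    ext a b
    exact hpdef k j a b
  have hα0' : ∀ j, ∀ v ∈ (A j).toFinset, 0 ≤ α j v :=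
    fun j v hv => hα0 j v (Set.mem_toFinset.1 hv)
  have hf' : ∀ j, Set.InjOn (f j) ((A j).toFinset : Set (Fin n₁ → Fin m)) :=
    fun j => by rw [Set.coe_toFinset]; exact hf j
  have haff' : ∀ j, AffineIndependent ℝ
      ((↑) : vec '' ((A j).toFinset : Set (Fin n₁ → Fin m)) → (Fin n₁ → Fin m → ℝ)) :=
    fun j => by rw [Set.coe_toFinset]; exact haff j
  have hu' : (⋂ j, convexHull ℝ (vec '' ((A j).toFinset : Set (Fin n₁ → Fin m)))) ⊆ {u} := by
    simp only [Set.coe_toFinset, hu, subset_refl]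
  rw [hp]
  exact ⟨vertexDist_mem_KDist f hα0' hα1 hαu,
    vertexDist_mem_extremePoints f hf' haff' hu' hα0' hα1 hαu⟩

open scoped Classical in
theorem stmt_19 {n₁ n₂ m : ℕ} (h₁ : 1 ≤ n₁) (h₂ : 1 ≤ n₂) (hm : 2 ≤ m)
    (A : Fin n₂ → Set (Fin n₁ → Fin m))
    (hne : ∀ j, (A j).Nonempty)
    (hcard : ∀ j, (A j).ncard ≤ m)
    (haff : ∀ j, AffineIndependent ℝ ((↑) : (vec '' A j) → (Fin n₁ → Fin m → ℝ)))
    (u : Fin n₁ → Fin m → ℝ)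
    (hu : (⋂ j, convexHull ℝ (vec '' A j)) = {u})
    (f : Fin n₂ → (Fin n₁ → Fin m) → Fin m)
    (hf : ∀ j, Set.InjOn (f j) (A j))
    (α : Fin n₂ → (Fin n₁ → Fin m) → ℝ)
    (hα0 : ∀ j, ∀ v ∈ A j, 0 ≤ α j v)
    (hα1 : ∀ j, ∑ v ∈ (A j).toFinset, α j v = 1)
    (hαu : ∀ j, ∑ v ∈ (A j).toFinset, α j v • vec v = u)
    (p : Fin n₁ → Fin n₂ → Matrix (Fin m) (Fin m) ℝ)
    (hpdef : ∀ k j a b, p k j a b =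
      ∑ v ∈ (A j).toFinset.filter (fun v => v k = a ∧ f j v = b), α j v) :
    p ∈ KDist n₁ n₂ m ∧ p ∈ Set.extremePoints ℝ (KDist n₁ n₂ m) :=
  stmt_19_general A haff u hu f hf α hα0 hα1 hαu p hpdef
end
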